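/- arXiv:0706.4201 — 4 statements merged into one kernel-verified Lean document; each statement's English description precedes it below -/
import Mathlib

section
/- Let T^d=(N,E,d) be a tree diagram with n nodes. Then the dimension of the upward nilpotent Lie algebra L_0(T^d) over ℂ equals 1 + Σ_{i=2}^n ℓ_i, where for a node ι_i with clan C_i={ι_{i_1},…,ι_{i_r}} and edge weights d_s = d[(ι_{i_s},ι_{i_{s+1}})] (1≤s≤r−1), ℓ_i is the coefficient of t^{d_1 d_2⋯d_{r−1}} in the formal power series 1/((1−t)^2 (1−t^{d_1})(1−t^{d_1 d_2})⋯(1−t^{d_1 d_2⋯d_{r−2}})); equivalently ℓ_i is the number of tuples (j_1,…,j_{r−1})∈ℕ^{r−1} with j_1 + Σ_{s=2}^{r−1} j_s d_1⋯d_{s−1} ≤ d_1⋯d_{r−1}. -/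
attribute [instance 100] LieRing.ofAssociativeRing

noncomputable section

/-- The algebra of linear operators on polynomials in `n` variables (contains the
differential operators with polynomial coefficients). -/
abbrev DiffOp (n : ℕ) : Type := Module.End ℂ (MvPolynomial (Fin n) ℂ)

/-- The partial derivative operator `∂_{x_i}`. -/
noncomputable def pd {n : ℕ} (i : Fin n) : DiffOp n := (MvPolynomial.pderiv i).toLinearMap

/-- The operator of multiplication by `x_i`. -/
noncomputable def mX {n : ℕ} (i : Fin n) : DiffOp n := LinearMap.mulLeft ℂ (MvPolynomial.X i)

/-- The operator of multiplication by the monomial `∏ x_a ^ (j a)`. -/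
noncomputable def mXpow {n : ℕ} (j : Fin n → ℕ) : DiffOp n :=
  LinearMap.mulLeft ℂ (∏ a : Fin n, (MvPolynomial.X a) ^ (j a))

/-- A tree diagram on `n` nodes (nodes `0,…,n-1`, node `0` being the root): every node
`i ≠ 0` has a unique parent `parent i < i`, and the edge `(parent i, i)` carries a
positive integral weight `weight i`. -/
structure TreeDiagram (n : ℕ) [NeZero n] where
  parent : Fin n → Fin n
  parent_lt : ∀ i : Fin n, i ≠ 0 → parent i < i
  weight : Fin n → ℕ
  weight_pos : ∀ i : Fin n, i ≠ 0 → 0 < weight i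

variable {n : ℕ} [NeZero n]

/-- The clan of a node: the set of nodes on the unique path from the root to `i`
(including both ends). -/
def clanSet (T : TreeDiagram n) : Fin n → Finset (Fin n)
  | i => if h : i = 0 then {i} else insert i (clanSet T (T.parent i))
termination_by i => i.val
decreasing_by exact T.parent_lt i h

/-- The product of the weights of all edges along the path from the root to `i`. -/
def chainWt (T : TreeDiagram n) : Fin n → ℕ
  | i => if h : i = 0 then 1 else chainWt T (T.parent i) * T.weight i
termination_by i => i.val
decreasing_by exact T.parent_lt i h

/-- `j` is a descendant of `i`. -/
def Desc (T : TreeDiagram n) (i j : Fin n) : Prop := i ≠ j ∧ i ∈ clanSet T j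

/-- A node is a tip if it has no children. -/
def IsTip (T : TreeDiagram n) (i : Fin n) : Prop := ∀ j : Fin n, j ≠ 0 → T.parent j ≠ i

/-- Generators `∂_{x_1}` and `x_i^{d[(ι_i,ι_j)]} ∂_{x_j}` for edges `(ι_i,ι_j)`. -/
def upGens (T : TreeDiagram n) : Set (DiffOp n) :=
  {pd (0 : Fin n)} ∪ {A | ∃ j : Fin n, j ≠ 0 ∧ A = (mX (T.parent j)) ^ (T.weight j) * pd j}

/-- Generators `∂_{x_r}` for tips `ι_r` and `x_j^{d[(ι_i,ι_j)]} ∂_{x_i}` for edges. -/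
def downGens (T : TreeDiagram n) : Set (DiffOp n) :=
  {A | ∃ r : Fin n, IsTip T r ∧ A = pd r} ∪
    {A | ∃ j : Fin n, j ≠ 0 ∧ A = (mX j) ^ (T.weight j) * pd (T.parent j)}

/-- The upward nilpotent Lie algebra `L_0(T^d)`. -/
def upL0 (T : TreeDiagram n) : LieSubalgebra ℂ (DiffOp n) :=
  LieSubalgebra.lieSpan ℂ _ (upGens T)

/-- The downward nilpotent Lie algebra `ℒ_0(T^d)`. -/
def downL0 (T : TreeDiagram n) : LieSubalgebra ℂ (DiffOp n) :=
  LieSubalgebra.lieSpan ℂ _ (downGens T)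

/-- The toral Cartan subalgebra `H = Σ ℂ x_i ∂_{x_i}`. -/
def Hcart (n : ℕ) : Submodule ℂ (DiffOp n) :=
  Submodule.span ℂ (Set.range fun i : Fin n => mX i * pd i)

/-- `L_1(T^d) = H + L_0(T^d)`. -/
def upL1 (T : TreeDiagram n) : Submodule ℂ (DiffOp n) := Hcart n ⊔ (upL0 T).toSubmodule

/-- `ℒ_1(T^d) = H + ℒ_0(T^d)`. -/
def downL1 (T : TreeDiagram n) : Submodule ℂ (DiffOp n) := Hcart n ⊔ (downL0 T).toSubmodule

/-- `I` is an abelian (Lie) ideal of `L`. -/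
def IsAbelianIdeal (L I : Submodule ℂ (DiffOp n)) : Prop :=
  I ≤ L ∧ (∀ x ∈ L, ∀ y ∈ I, ⁅x, y⁆ ∈ I) ∧ ∀ x ∈ I, ∀ y ∈ I, ⁅x, y⁆ = (0 : DiffOp n)

/-- The lower central series: `lcs L k = G^{k+1}` in the paper's notation
(`G^1 = G`, `G^{i+1} = [G, G^i]`). -/
def lcs (L : LieSubalgebra ℂ (DiffOp n)) : ℕ → Submodule ℂ (DiffOp n)
  | 0 => L.toSubmodule
  | (k+1) => Submodule.span ℂ {z : DiffOp n | ∃ x ∈ L, ∃ y ∈ lcs L k, z = ⁅x, y⁆}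

/-- Membership in `R_i`: exponent tuples supported on the strict ancestors of `i`
(the clan of `i` with `i` removed) with `Σ_a j_a · d_1⋯d_{s(a)-1} ≤ d_1⋯d_{r-1}`. -/
def memR (T : TreeDiagram n) (i : Fin n) (j : Fin n → ℕ) : Prop :=
  (∀ a : Fin n, a ∉ (clanSet T i).erase i → j a = 0) ∧
    ∑ a ∈ (clanSet T i).erase i, j a * chainWt T a ≤ chainWt T i

/-- `ℓ_i`: the number of exponent tuples in `R_i`. -/
def ellCard (T : TreeDiagram n) (i : Fin n) : ℕ := Nat.card {j : Fin n → ℕ // memR T i j}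

/-- A node is multiplicity-free if the edge to its parent has weight 1. -/
def MultFree (T : TreeDiagram n) (i : Fin n) : Prop := i ≠ 0 ∧ T.weight i = 1

/-- `Υ`: the set of nodes all of whose descendants are multiplicity-free. -/
def Upsilon (T : TreeDiagram n) : Set (Fin n) := {i | ∀ j : Fin n, Desc T i j → MultFree T j}

/-- A set of nodes is independent if no element is a descendant of another. -/
def IndepSet (T : TreeDiagram n) (S : Set (Fin n)) : Prop :=
  ∀ a ∈ S, ∀ b ∈ S, ¬ Desc T a b

/-- The ideal `I(S) = Span{x^{j⃗}∂_{x_i}, x^{j⃗}∂_{x_s} : ι_i ∈ S, j⃗ ∈ R_i, ι_s ∈ D_i}`. -/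
def upIdealS (T : TreeDiagram n) (S : Set (Fin n)) : Submodule ℂ (DiffOp n) :=
  Submodule.span ℂ
    {A : DiffOp n | ∃ i ∈ S, ∃ j : Fin n → ℕ, memR T i j ∧
      ∃ s : Fin n, (s = i ∨ Desc T i s) ∧ A = mXpow j * pd s}

/-- The partial order `⪯` on `R_i`. -/
def Rle (T : TreeDiagram n) (i : Fin n) (j l : Fin n → ℕ) : Prop :=
  ∀ b ∈ (clanSet T i).erase i,
    ∑ a ∈ ((clanSet T i).erase i).filter (fun a => b ∈ clanSet T a),
        j a * (chainWt T a / chainWt T b) ≤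
      ∑ a ∈ ((clanSet T i).erase i).filter (fun a => b ∈ clanSet T a),
        l a * (chainWt T a / chainWt T b)

/-- `W = S ∪ ⋃_{ι_i ∈ S} D_i`. -/
def Wset (T : TreeDiagram n) (S : Set (Fin n)) : Set (Fin n) :=
  {r | ∃ i ∈ S, r = i ∨ Desc T i r}

/-- An admissible pair for abelian ideals of `L_1(T^d)`. -/
structure UpAdmiss (n : ℕ) [NeZero n] (T : TreeDiagram n) where
  S : Set (Fin n)
  K : Fin n → Set (Fin n → ℕ)
  S_ne : S.Nonempty
  S_sub : S ⊆ Upsilon T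
  S_indep : IndepSet T S
  K_out : ∀ r : Fin n, r ∉ Wset T S → K r = ∅
  K_mem : ∀ i ∈ S, ∀ r : Fin n, (r = i ∨ Desc T i r) → ∀ j ∈ K r, memR T i j
  K_indep : ∀ i ∈ S, ∀ r : Fin n, (r = i ∨ Desc T i r) →
    ∀ j ∈ K r, ∀ l ∈ K r, Rle T i j l → Rle T i l j
  K_ne : ∀ i ∈ S, (K i).Nonempty
  K_chain : ∀ i ∈ S, ∀ r : Fin n, (r = i ∨ Desc T i r) → ∀ s : Fin n, Desc T r s →
    ∀ j ∈ K r, ∀ l ∈ K s, ¬ (Rle T i l j ∧ ¬ Rle T i j l)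

/-- The abelian ideal `I[S,{K_r}] = Σ_{ι_s∈W} Σ_{j⃗∈K_s} I[s,j⃗]`. -/
def upAdIdeal (T : TreeDiagram n) (P : UpAdmiss n T) : Submodule ℂ (DiffOp n) :=
  Submodule.span ℂ
    {A : DiffOp n | ∃ i ∈ P.S, ∃ s : Fin n, (s = i ∨ Desc T i s) ∧ ∃ j ∈ P.K s,
      ∃ l : Fin n → ℕ, memR T i l ∧ Rle T i l j ∧
        ∃ r : Fin n, (r = s ∨ Desc T s r) ∧ A = mXpow l * pd r}

instance (T : TreeDiagram n) (i : Fin n) : Decidable (IsTip T i) :=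
  decidable_of_iff (∀ j : Fin n, j ≠ 0 → T.parent j ≠ i) Iff.rfl

instance (T : TreeDiagram n) (i j : Fin n) : Decidable (Desc T i j) :=
  decidable_of_iff (i ≠ j ∧ i ∈ clanSet T j) Iff.rfl

/-- `D_i` as a finset. -/
def Dfin (T : TreeDiagram n) (i : Fin n) : Finset (Fin n) :=
  Finset.univ.filter fun j => Desc T i j

/-- `κ_i`: the product of the weights of all edges inside `F_i = {ι_i} ∪ D_i`. -/
def kappa (T : TreeDiagram n) (i : Fin n) : ℕ := ∏ j ∈ Dfin T i, T.weight j

/-- The product of the weights of the edges on the path from `i` to a descendant `j`: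
`∏_{e ∈ E_{i,j}} d(e)`. -/
def pathWt (T : TreeDiagram n) (i j : Fin n) : ℕ :=
  ∏ a ∈ (clanSet T j) \ (clanSet T i), T.weight a

/-- `κ_{i,j} = κ_i / ∏_{e ∈ E_{i,j}} d(e)`. -/
def kappaIS (T : TreeDiagram n) (i j : Fin n) : ℕ := kappa T i / pathWt T i j

/-- Membership in `ℜ_i`: tuples supported on `D_i` with `Σ_s j_s κ_{i,s} ≤ κ_i`. -/
def memcR (T : TreeDiagram n) (i : Fin n) (j : Fin n → ℕ) : Prop :=
  (∀ a : Fin n, ¬ Desc T i a → j a = 0) ∧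
    ∑ a ∈ Dfin T i, j a * kappaIS T i a ≤ kappa T i

/-- The partial order `⪯` on `ℜ_i`. -/
def cRle (T : TreeDiagram n) (i : Fin n) (j l : Fin n → ℕ) : Prop :=
  ∀ m : Fin n, Desc T i m →
    ∑ r ∈ (clanSet T (T.parent m)) \ (clanSet T i), j r * pathWt T r (T.parent m) ≤
      ∑ r ∈ (clanSet T (T.parent m)) \ (clanSet T i), l r * pathWt T r (T.parent m)

/-- `Φ = {ι_1} ∪ {ι_i : all edges inside the clan of `ι_i` have weight 1}`. -/
def PhiSet (T : TreeDiagram n) : Set (Fin n) :=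
  {i | ∀ a ∈ clanSet T i, a ≠ 0 → T.weight a = 1}

/-- `Ω`: the set of children of the root. -/
def OmegaSet (T : TreeDiagram n) : Set (Fin n) := {i | i ≠ 0 ∧ T.parent i = 0}

/-- The ideal `𝓘(S) = Span{x^{j⃗}∂_{x_s} : ι_i ∈ S, j⃗ ∈ ℜ_i, ι_s ∈ C_i}`. -/
def downIdealS (T : TreeDiagram n) (S : Set (Fin n)) : Submodule ℂ (DiffOp n) :=
  Submodule.span ℂ
    {A : DiffOp n | ∃ i ∈ S, ∃ j : Fin n → ℕ, memcR T i j ∧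
      ∃ s ∈ clanSet T i, A = mXpow j * pd s}

/-- An admissible pair for abelian ideals of `ℒ_1(T^d)`. -/
structure DownAdmiss (n : ℕ) [NeZero n] (T : TreeDiagram n) where
  S : Set (Fin n)
  K : Fin n → Fin n → Set (Fin n → ℕ)
  S_ne : S.Nonempty
  S_sub : S ⊆ PhiSet T
  S_indep : IndepSet T S
  K_out : ∀ i r : Fin n, (i ∉ S ∨ r ∉ clanSet T i) → K i r = ∅
  K_mem : ∀ i ∈ S, ∀ r ∈ clanSet T i, ∀ j ∈ K i r, memcR T i j
  K_indep : ∀ i ∈ S, ∀ r ∈ clanSet T i, ∀ j ∈ K i r, ∀ l ∈ K i r,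
    cRle T i j l → cRle T i l j
  K_ne : ∀ i ∈ S, (K i i).Nonempty
  K_cond : ∀ i ∈ S, ∀ s ∈ clanSet T i, ∀ r ∈ clanSet T s, r ≠ s →
    ∀ j ∈ K i r, ∀ l ∈ K i s, ¬ (cRle T i j l ∧ ¬ cRle T i l j)

/-- The abelian ideal `𝓘[S,{𝒦_r}] = Σ_{ι_s∈W} Σ_{j⃗∈𝒦_s} 𝓘[s,j⃗]`. -/
def downAdIdeal (T : TreeDiagram n) (P : DownAdmiss n T) : Submodule ℂ (DiffOp n) :=
  Submodule.span ℂ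
    {A : DiffOp n | ∃ i ∈ P.S, ∃ s ∈ clanSet T i, ∃ j ∈ P.K i s,
      ∃ l : Fin n → ℕ, memcR T s l ∧ cRle T s l j ∧
        ∃ r ∈ clanSet T s, A = mXpow l * pd r}

end

noncomputable section

/-- `A` acts locally nilpotently at `p`. -/
def LocNilpOn {M : Type} [AddCommGroup M] [Module ℂ M] (A : Module.End ℂ M) (p : M) : Prop :=
  ∃ N : ℕ, ∀ k : ℕ, N ≤ k → (A ^ k) p = 0

open scoped Classical in
/-- `e^A(p) = Σ_k A^k(p)/k!`, a finite sum when `A` acts locally nilpotently at `p`. -/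
noncomputable def expApply {M : Type} [AddCommGroup M] [Module ℂ M]
    (A : Module.End ℂ M) (p : M) : M :=
  if h : LocNilpOn A p then
    ∑ k ∈ Finset.range h.choose, ((k.factorial : ℂ))⁻¹ • (A ^ k) p
  else 0

open scoped Classical in
/-- `θ(A)(q) = Σ_{i≥1} ((−1)^{i−1}/i!) A^{i−1}(q)` where `θ(x) = (1−e^{−x})/x`. -/
noncomputable def thetaApply {M : Type} [AddCommGroup M] [Module ℂ M]
    (A : Module.End ℂ M) (q : M) : M :=
  if h : LocNilpOn A q then
    ∑ k ∈ Finset.range h.choose, ((-1 : ℂ) ^ k * (((k + 1).factorial : ℂ))⁻¹) • (A ^ k) q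
  else 0

abbrev DiffOp' (n : ℕ) : Type := Module.End ℂ (MvPolynomial (Fin n) ℂ)

noncomputable def pd' {n : ℕ} (i : Fin n) : DiffOp' n := (MvPolynomial.pderiv i).toLinearMap
noncomputable def mX' {n : ℕ} (i : Fin n) : DiffOp' n := LinearMap.mulLeft ℂ (MvPolynomial.X i)

/-- `D_i = t(∂_{x_1} + Σ_{r=1}^{i-1} x_r^{m_r} ∂_{x_{r+1}})` (0-based indices). -/
noncomputable def DchainOp (n : ℕ) (hn : 0 < n) (m : ℕ → ℕ) (t : ℂ) (i : ℕ) : DiffOp' n :=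
  t • (pd' (⟨0, hn⟩ : Fin n) +
    ∑ k ∈ Finset.univ.filter (fun k : Fin n => 0 < k.val ∧ k.val < i),
      (mX' (⟨k.val - 1, lt_of_le_of_lt (Nat.sub_le _ _) k.isLt⟩ : Fin n)) ^ (m k.val) * pd' k)

/-- `η_{j+1}` of the chain: `η_1(t) = t`, `η_{j+2}(t) = ∫_0^t (x_{j+1} + η_{j+1}(y))^{m_{j+1}} dy`. -/
noncomputable def etaChain (m : ℕ → ℕ) (x : ℕ → ℝ) : ℕ → ℝ → ℝ
  | 0 => fun t => t
  | (j+1) => fun t => ∫ y in (0:ℝ)..t, (x j + etaChain m x j y) ^ (m (j+1))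

/-- `ξ̃_{n-k}` of the chain (reversed indexing):
`ξ̃_n(t) = t w_n^{m_n}`, `ξ̃_i(t) = ∫_0^t (w_i + ξ̃_{i+1}(y))^{m_i} dy`. -/
noncomputable def xiRev (n : ℕ) (m : ℕ → ℕ) (w : ℕ → ℂ) : ℕ → ℝ → ℂ
  | 0 => fun t => (t : ℂ) * (w (n-1)) ^ (m n)
  | (k+1) => fun t => ∫ y in (0:ℝ)..t, (w (n-k-2) + xiRev n m w k y) ^ (m (n-k-1))

/-- Formal antiderivative `∫_0^t` of a polynomial. -/
noncomputable def polyInt (p : Polynomial ℂ) : Polynomial ℂ :=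
  p.sum fun k a => Polynomial.C (a / (k + 1)) * Polynomial.X ^ (k + 1)

/-- Coefficient-wise antiderivative of a polynomial in the commuting symbols `∂_{x_i}`
with coefficients polynomial in `t`. -/
noncomputable def mvPolyInt {n : ℕ} (q : MvPolynomial (Fin n) (Polynomial ℂ)) :
    MvPolynomial (Fin n) (Polynomial ℂ) :=
  ∑ d ∈ q.support, MvPolynomial.monomial d (polyInt (q.coeff d))

/-- Interpretation of a commutative polynomial in the symbols `∂_{x_i}` as a
constant-coefficient differential operator. -/
noncomputable def opOfDeriv {n : ℕ} (P : MvPolynomial (Fin n) ℂ) : DiffOp' n :=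
  ∑ d ∈ P.support, P.coeff d • ((List.finRange n).map fun a => pd' a ^ d a).prod

/-- `(Σ a_k x^k)` coefficients of the Campbell–Hausdorff formula. -/
noncomputable def aCH : ℕ → ℚ
  | 0 => 1
  | (k+1) => ∑ mm ∈ Finset.Icc 1 (k+2), ((-1 : ℚ)) ^ (mm - 1) / mm *
      ∑ p ∈ Finset.Nat.antidiagonalTuple mm (k + 2 - mm),
        ((∏ i : Fin mm, (if i.val = mm - 1 then (p i).factorial
          else ((p i) + 1).factorial : ℕ) : ℕ) : ℚ)⁻¹

end

noncomputable section
variable {n : ℕ} [NeZero n]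

/-- `η_i(t)` for a tree: `η_1(t) = t`,
`η_i(t) = ∫_0^t (x_{p(i)} + η_{p(i)}(y))^{d[(ι_{p(i)},ι_i)]} dy`. -/
noncomputable def etaTree (T : TreeDiagram n) (x : Fin n → ℝ) : Fin n → ℝ → ℝ
  | i => if h : i = 0 then fun t => t
      else fun t => ∫ y in (0:ℝ)..t, (x (T.parent i) + etaTree T x (T.parent i) y) ^ (T.weight i)
termination_by i => i.val
decreasing_by exact T.parent_lt i h

/-- The children of a node. -/
def childFinset (T : TreeDiagram n) (i : Fin n) : Finset (Fin n) :=
  Finset.univ.filter fun s : Fin n => s ≠ 0 ∧ T.parent s = i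

/-- `ξ̃_i(t)` as a polynomial in the commuting symbols `∂_{x_j}` (the variables of the
`MvPolynomial`) with coefficients polynomial in `t`:
`ξ̃_r(t) = t ∂_{x_r}^{m_r}` for tips, and
`ξ̃_i(t) = ∫_0^t (∂_{x_i} + Σ_{ι_s∈Θ_i} ξ̃_s(y))^{m_i} dy` otherwise. -/
noncomputable def xiTree (T : TreeDiagram n) (m : Fin n → ℕ) :
    Fin n → MvPolynomial (Fin n) (Polynomial ℂ)
  | i =>
    if IsTip T i then MvPolynomial.C Polynomial.X * (MvPolynomial.X i) ^ (m i)
    else mvPolyInt ((MvPolynomial.X i +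
      ∑ s ∈ (childFinset T i).attach, xiTree T m s.1) ^ (m i))
termination_by i => n - i.val
decreasing_by
  have hs := s.2
  simp only [childFinset, Finset.mem_filter, Finset.mem_univ, true_and] at hs
  have h1 : T.parent s.1 < s.1 := T.parent_lt s.1 hs.1
  rw [hs.2] at h1
  have h2 := s.1.isLt
  have h3 : i.val < s.1.val := h1
  omega

/-- The operator `ξ_i`: `ξ_1 = ξ̃_1(t)` and `ξ_i = x_{p(i)}·ξ̃_i(t)` for `i ≥ 2`. -/
noncomputable def xiFull (T : TreeDiagram n) (m : Fin n → ℕ) (t : ℂ) (i : Fin n) : DiffOp n :=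
  if i = 0 then opOfDeriv ((xiTree T m i).map (Polynomial.evalRingHom t))
  else mX (T.parent i) * opOfDeriv ((xiTree T m i).map (Polynomial.evalRingHom t))

/-- `D = ∂_{x_1}^{m_1} + Σ_{(ι_i,ι_j)∈E} x_i ∂_{x_j}^{m_j}`. -/
noncomputable def Dtree (T : TreeDiagram n) (m : Fin n → ℕ) : DiffOp n :=
  pd (0 : Fin n) ^ (m 0) +
    ∑ j ∈ Finset.univ.filter (fun j : Fin n => j ≠ 0), mX (T.parent j) * pd j ^ (m j)

/-- The chain tree `T_{A_n}` with all weights `1`. -/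
def chainTree (n : ℕ) [NeZero n] : TreeDiagram n where
  parent := fun i => ⟨i.val - 1, lt_of_le_of_lt (Nat.sub_le _ _) i.isLt⟩
  parent_lt := by
    intro i hi
    have h0 : i.val ≠ 0 := by
      intro h; exact hi (Fin.ext (by simpa using h))
    simp only [Fin.lt_def]
    omega
  weight := fun _ => 1
  weight_pos := fun _ _ => one_pos

end

/-!
The monomial operators `x^j ∂_{x_i}` with `j ∈ R_i` form a basis of `L_0(T^d)`. Give `x_a` the
weight `chainWt a`, the product of the edge weights from the root to `a`. The span of these
operators is closed under brackets: `[x^j ∂_{x_s}, x^l ∂_{x_t}]` is a combination of monomial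
operators in which one factor `x_s` is traded for `x^j`, of weighted degree at most `chainWt s`.
Conversely, each of them is reached from the generators. Starting from `x_{p(i)}^d ∂_{x_i}`, a
bracket with `x^m ∂_{x_{p(i)}}`, for `m ∈ R_{p(i)}` of top degree, trades one factor `x_{p(i)}`
for `x^m`. Since the weights along a clan divide one another, a greedy choice of `m` reaches every
exponent of top degree, and brackets with `∂_{x_1}` then lower the degree. Evaluation on the
coordinate functions shows that the monomial operators are linearly independent.
-/

lemma LieSubalgebra.toSubmodule_lieSpan_eq_span {R L : Type*} [CommRing R] [LieRing L]
    [LieAlgebra R L] {s t : Set L} (hst : s ⊆ t) (hts : t ⊆ LieSubalgebra.lieSpan R L s)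
    (ht : ∀ x ∈ t, ∀ y ∈ t, ⁅x, y⁆ ∈ Submodule.span R t) :
    (LieSubalgebra.lieSpan R L s).toSubmodule = Submodule.span R t := by
  have lie_mem : ∀ {x y}, x ∈ Submodule.span R t → y ∈ Submodule.span R t →
      ⁅x, y⁆ ∈ Submodule.span R t := by
    intro x y hx hy
    induction hx, hy using Submodule.span_induction₂ with
    | mem_mem x y hx hy => exact ht x hx y hy
    | zero_left y hy => simp
    | zero_right x hx => simp
    | add_left x y z _ _ _ hx hy => simpa using add_mem hx hy
    | add_right x y z _ _ _ hx hy => simpa using add_mem hx hy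
    | smul_left r x y _ _ h => simpa using Submodule.smul_mem _ r h
    | smul_right r x y _ _ h => simpa using Submodule.smul_mem _ r h
  refine le_antisymm ?_ (Submodule.span_le.mpr hts)
  change _ ≤ ({ Submodule.span R t with lie_mem' := lie_mem } : LieSubalgebra R L)
  exact LieSubalgebra.lieSpan_le.mpr (hst.trans Submodule.subset_span)

lemma Finset.exists_le_sum_mul_eq_of_dvd {ι : Type*} [LinearOrder ι] (w : ι → ℕ) (s : Finset ι)
    (hw : ∀ a ∈ s, ∀ b ∈ s, a ≤ b → w a ∣ w b) (l : ι → ℕ) (t : ℕ) (ht : ∀ a ∈ s, w a ∣ t)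
    (hle : t ≤ ∑ a ∈ s, l a * w a) : ∃ m ≤ l, ∑ a ∈ s, m a * w a = t := by
  induction s using Finset.induction_on_max generalizing t with
  | empty => exact ⟨0, fun _ => Nat.zero_le _, by simp at hle ⊢; omega⟩
  | insert a s hlt ih =>
    have has : a ∉ s := fun h => lt_irrefl a (hlt a h)
    have hwa : ∀ x ∈ s, w x ∣ w a := fun x hx =>
      hw x (mem_insert_of_mem hx) a (mem_insert_self a s) (hlt x hx).le
    have hta : w a ∣ t := ht a (mem_insert_self a s)
    rw [Finset.sum_insert has] at hle
    -- take as many copies of the largest weight as possible; the rest is a multiple of all of `s`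
    set k := min (l a) (t / w a)
    have hkt : k * w a ≤ t :=
      (Nat.mul_le_mul_right _ (min_le_right _ _)).trans (Nat.div_mul_le_self _ _)
    have hrest : t - k * w a ≤ ∑ x ∈ s, l x * w x := by
      rcases min_choice (l a) (t / w a) with hk | hk
      · rw [show k = l a from hk]
        omega
      · rw [show k = t / w a from hk, Nat.div_mul_cancel hta, Nat.sub_self]
        exact Nat.zero_le _
    obtain ⟨m, hml, hm⟩ :=
      ih (fun x hx y hy => hw x (mem_insert_of_mem hx) y (mem_insert_of_mem hy)) (t - k * w a)
        (fun x hx => Nat.dvd_sub (ht x (mem_insert_of_mem hx)) ((hwa x hx).mul_left k)) hrest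
    refine ⟨Function.update m a k, fun x => ?_, ?_⟩
    · rcases eq_or_ne x a with rfl | hx
      · rw [Function.update_self]
        exact min_le_left _ _
      · simpa [hx] using hml x
    · rw [Finset.sum_insert has, Function.update_self, Finset.sum_congr rfl fun x hx => by
        rw [Function.update_of_ne (ne_of_mem_of_not_mem hx has)], hm]
      omega

section Operators

open MvPolynomial

variable {n : ℕ}

lemma prod_X_pow_eq_monomial_equivFunOnFinite (l : Fin n → ℕ) :
    ∏ a, (X a : MvPolynomial (Fin n) ℂ) ^ l a = monomial (Finsupp.equivFunOnFinite.symm l) 1 := by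
  rw [monomial_eq, C_1, one_mul, Finsupp.prod_fintype _ _ fun _ => pow_zero _]
  rfl

lemma mXpow_apply (l : Fin n → ℕ) (p : MvPolynomial (Fin n) ℂ) :
    mXpow l p = monomial (Finsupp.equivFunOnFinite.symm l) 1 * p := by
  rw [mXpow, LinearMap.mulLeft_apply, prod_X_pow_eq_monomial_equivFunOnFinite]

lemma mXpow_zero : mXpow (0 : Fin n → ℕ) = 1 := by
  refine LinearMap.ext fun p => ?_
  rw [mXpow_apply, show Finsupp.equivFunOnFinite.symm 0 = 0 from Finsupp.ext fun _ => rfl]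
  simp

lemma mXpow_add (j l : Fin n → ℕ) : mXpow (j + l) = mXpow j * mXpow l := by
  refine LinearMap.ext fun p => ?_
  rw [Module.End.mul_apply, mXpow_apply, mXpow_apply, mXpow_apply, ← mul_assoc, monomial_mul,
    one_mul]
  congr
  exact Finsupp.ext fun _ => rfl

lemma mXpow_single (s : Fin n) (c : ℕ) : mXpow (Pi.single s c) = mX s ^ c := by
  rw [mXpow, mX, LinearMap.pow_mulLeft, Fintype.prod_eq_single s fun a ha => by simp [ha]]
  simp

lemma pderiv_monomial_equivFunOnFinite (s : Fin n) (l : Fin n → ℕ) :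
    pderiv s (monomial (Finsupp.equivFunOnFinite.symm l) (1 : ℂ)) =
      (l s : ℂ) • monomial (Finsupp.equivFunOnFinite.symm (l - Pi.single s 1)) 1 := by
  rw [pderiv_monomial, smul_monomial, smul_eq_mul, mul_one, one_mul]
  congr 2
  ext a
  by_cases h : a = s <;> simp [h]

lemma pd_mul_mXpow (s : Fin n) (l : Fin n → ℕ) :
    pd s * mXpow l = (l s : ℂ) • mXpow (l - Pi.single s 1) + mXpow l * pd s := by
  refine LinearMap.ext fun p => ?_
  simp only [Module.End.mul_apply, LinearMap.add_apply, LinearMap.smul_apply, mXpow_apply, pd,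
    Derivation.coeFn_coe]
  rw [Derivation.leibniz, pderiv_monomial_equivFunOnFinite, smul_eq_mul p, mul_smul_comm,
    mul_comm p, add_comm, smul_eq_mul]

lemma commute_pd (s t : Fin n) : Commute (pd s) (pd t) := by
  refine LinearMap.ext fun p => ?_
  simp only [Module.End.mul_apply, pd, Derivation.coeFn_coe]
  induction p using MvPolynomial.induction_on' with
  | add p q hp hq => simp [hp, hq]
  | monomial d a =>
    simp only [pderiv_monomial]
    rcases eq_or_ne s t with rfl | hst
    · rfl
    · rw [tsub_right_comm]
      simp [hst, hst.symm, mul_right_comm]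

lemma mXpow_mul_pd_mul_mXpow_mul_pd (j l : Fin n → ℕ) (s t : Fin n) :
    mXpow j * pd s * (mXpow l * pd t) =
      (l s : ℂ) • (mXpow (j + (l - Pi.single s 1)) * pd t) + mXpow (j + l) * (pd s * pd t) := by
  rw [mul_assoc, ← mul_assoc (pd s), pd_mul_mXpow]
  simp only [add_mul, mul_add, smul_mul_assoc, mul_smul_comm, ← mul_assoc, mXpow_add]

lemma lie_mXpow_mul_pd (j l : Fin n → ℕ) (s t : Fin n) :
    ⁅mXpow j * pd s, mXpow l * pd t⁆ =
      (l s : ℂ) • (mXpow (j + (l - Pi.single s 1)) * pd t) -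
        (j t : ℂ) • (mXpow (l + (j - Pi.single t 1)) * pd s) := by
  rw [Ring.lie_def, mXpow_mul_pd_mul_mXpow_mul_pd, mXpow_mul_pd_mul_mXpow_mul_pd,
    (commute_pd t s).eq, add_comm l j]
  abel

lemma linearIndependent_mXpow_mul_pd :
    LinearIndependent ℂ (fun p : Fin n × (Fin n → ℕ) => mXpow p.2 * pd p.1) := by
  let evalX : DiffOp n →ₗ[ℂ] Fin n → MvPolynomial (Fin n) ℂ :=
    LinearMap.pi fun k => LinearMap.applyₗ (X k)
  let b := Pi.basis fun _ : Fin n => basisMonomials (Fin n) ℂ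
  refine LinearIndependent.of_comp evalX ?_
  have : evalX ∘ (fun p : Fin n × (Fin n → ℕ) => mXpow p.2 * pd p.1) =
      b ∘ fun p => ⟨p.1, Finsupp.equivFunOnFinite.symm p.2⟩ := by
    ext1 ⟨i, j⟩
    ext1 k
    rcases eq_or_ne k i with rfl | hki
    · simp [evalX, b, pd, mXpow_apply]
    · simp [evalX, b, pd, mXpow_apply, pderiv_X_of_ne hki, hki]
  rw [this]
  refine b.linearIndependent.comp _ fun p q h => ?_
  simp only [Sigma.mk.injEq] at h
  exact Prod.ext h.1 (Finsupp.equivFunOnFinite.symm.injective (eq_of_heq h.2))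

lemma mXpow_add_mul_pd_mem (L : LieSubalgebra ℂ (DiffOp n)) {m l : Fin n → ℕ} {s t : Fin n}
    (hm : mXpow m * pd s ∈ L) (hmt : m t = 0) (hl : mXpow (l + Pi.single s 1) * pd t ∈ L) :
    mXpow (m + l) * pd t ∈ L := by
  have h := L.lie_mem hm hl
  rw [lie_mXpow_mul_pd, hmt, add_tsub_cancel_right] at h
  simp only [Pi.add_apply, Pi.single_eq_same, Nat.cast_zero, zero_smul, sub_zero] at h
  exact (Submodule.smul_mem_iff L.toSubmodule (Nat.cast_ne_zero.mpr (by simp))).mp h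

lemma mXpow_mul_pd_mem_of_add_single (L : LieSubalgebra ℂ (DiffOp n)) {l : Fin n → ℕ}
    {s t : Fin n} (hs : pd s ∈ L) (k : ℕ) (h : mXpow (l + Pi.single s k) * pd t ∈ L) :
    mXpow l * pd t ∈ L := by
  induction k with
  | zero => simpa using h
  | succ k ih =>
    refine ih ?_
    rw [← zero_add (l + _)]
    refine mXpow_add_mul_pd_mem L (by rwa [mXpow_zero, one_mul]) rfl ?_
    rwa [add_assoc, ← Pi.single_add, ← Nat.succ_eq_add_one]

end Operators

section TreeDiagram

variable {n : ℕ} [NeZero n] (T : TreeDiagram n)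

lemma TreeDiagram.parent_induction {P : Fin n → Prop}
    (h : ∀ i, (i ≠ 0 → P (T.parent i)) → P i) (i : Fin n) : P i := by
  induction i using WellFoundedLT.induction with
  | _ i ih => exact h i fun hi => ih _ (T.parent_lt i hi)

@[simp] lemma clanSet_zero : clanSet T 0 = {0} := by
  rw [clanSet.eq_1, dif_pos rfl]

lemma clanSet_of_ne_zero {i : Fin n} (hi : i ≠ 0) :
    clanSet T i = insert i (clanSet T (T.parent i)) := by
  rw [clanSet.eq_1, dif_neg hi]

@[simp] lemma chainWt_zero : chainWt T 0 = 1 := by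
  rw [chainWt.eq_1, dif_pos rfl]

lemma chainWt_of_ne_zero {i : Fin n} (hi : i ≠ 0) :
    chainWt T i = chainWt T (T.parent i) * T.weight i := by
  rw [chainWt.eq_1, dif_neg hi]

lemma chainWt_pos (i : Fin n) : 0 < chainWt T i := by
  induction i using T.parent_induction with
  | h i ih =>
    rcases eq_or_ne i 0 with rfl | hi
    · simp
    · rw [chainWt_of_ne_zero T hi]
      exact Nat.mul_pos (ih hi) (T.weight_pos i hi)

lemma le_of_mem_clanSet {i a : Fin n} (ha : a ∈ clanSet T i) : a ≤ i := by
  induction i using T.parent_induction with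
  | h i ih =>
    rcases eq_or_ne i 0 with rfl | hi
    · simp_all
    · rw [clanSet_of_ne_zero T hi, Finset.mem_insert] at ha
      rcases ha with rfl | ha
      · rfl
      · exact (ih hi ha).trans (T.parent_lt i hi).le

lemma self_mem_clanSet (i : Fin n) : i ∈ clanSet T i := by
  rcases eq_or_ne i 0 with rfl | hi
  · simp
  · simp [clanSet_of_ne_zero T hi]

lemma zero_mem_clanSet (i : Fin n) : 0 ∈ clanSet T i := by
  induction i using T.parent_induction with
  | h i ih =>
    rcases eq_or_ne i 0 with rfl | hi
    · simp
    · exact clanSet_of_ne_zero T hi ▸ Finset.mem_insert_of_mem (ih hi)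

lemma clanSet_erase_self {i : Fin n} (hi : i ≠ 0) :
    (clanSet T i).erase i = clanSet T (T.parent i) := by
  rw [clanSet_of_ne_zero T hi, Finset.erase_insert]
  exact fun h => (le_of_mem_clanSet T h).not_gt (T.parent_lt i hi)

lemma clanSet_subset_of_mem {a b : Fin n} (ha : a ∈ clanSet T b) : clanSet T a ⊆ clanSet T b := by
  induction b using T.parent_induction with
  | h b ih =>
    rcases eq_or_ne b 0 with rfl | hb
    · simp_all
    · rw [clanSet_of_ne_zero T hb] at ha ⊢
      rcases Finset.mem_insert.mp ha with rfl | ha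
      · rw [← clanSet_of_ne_zero T hb]
      · exact (ih hb ha).trans (Finset.subset_insert _ _)

lemma chainWt_dvd_of_mem_clanSet {a b : Fin n} (ha : a ∈ clanSet T b) :
    chainWt T a ∣ chainWt T b := by
  induction b using T.parent_induction with
  | h b ih =>
    rcases eq_or_ne b 0 with rfl | hb
    · simp_all
    · rw [clanSet_of_ne_zero T hb] at ha
      rcases Finset.mem_insert.mp ha with rfl | ha
      · rfl
      · rw [chainWt_of_ne_zero T hb]
        exact (ih hb ha).mul_right _

lemma mem_clanSet_of_le {i a b : Fin n} (ha : a ∈ clanSet T i) (hb : b ∈ clanSet T i)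
    (hab : a ≤ b) : a ∈ clanSet T b := by
  induction i using T.parent_induction with
  | h i ih =>
    rcases eq_or_ne i 0 with rfl | hi
    · simp_all
    · rw [clanSet_of_ne_zero T hi, Finset.mem_insert] at ha hb
      rcases hb with rfl | hb
      · exact clanSet_of_ne_zero T hi ▸ Finset.mem_insert.mpr ha
      rcases ha with rfl | ha
      · exact absurd ((le_of_mem_clanSet T hb).trans_lt (T.parent_lt a hi)) hab.not_gt
      · exact ih hi ha hb

def weightedDeg (l : Fin n → ℕ) : ℕ := ∑ a, l a * chainWt T a

lemma weightedDeg_add (j l : Fin n → ℕ) :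
    weightedDeg T (j + l) = weightedDeg T j + weightedDeg T l := by
  simp only [weightedDeg, Pi.add_apply, add_mul, Finset.sum_add_distrib]

lemma weightedDeg_single (s : Fin n) (c : ℕ) :
    weightedDeg T (Pi.single s c) = c * chainWt T s := by
  rw [weightedDeg, Fintype.sum_eq_single s fun a ha => by simp [ha]]
  simp

lemma weightedDeg_eq_sum_of_support {s : Finset (Fin n)} {l : Fin n → ℕ}
    (hl : ∀ a ∉ s, l a = 0) : weightedDeg T l = ∑ a ∈ s, l a * chainWt T a :=
  (Finset.sum_subset (Finset.subset_univ s) fun a _ ha => by simp [hl a ha]).symm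

lemma mul_chainWt_le_weightedDeg (l : Fin n → ℕ) (s : Fin n) :
    l s * chainWt T s ≤ weightedDeg T l :=
  Finset.single_le_sum (f := fun a => l a * chainWt T a) (fun _ _ => Nat.zero_le _)
    (Finset.mem_univ s)

lemma weightedDeg_sub_single_add {l : Fin n → ℕ} {s : Fin n} (hs : l s ≠ 0) :
    weightedDeg T (l - Pi.single s 1) + chainWt T s = weightedDeg T l := by
  have : l - Pi.single s 1 + Pi.single s 1 = l := tsub_add_cancel_of_le fun a => by
    rcases eq_or_ne a s with rfl | ha
    · simpa using Nat.one_le_iff_ne_zero.mpr hs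
    · simp [ha]
  conv_rhs => rw [← this]
  rw [weightedDeg_add, weightedDeg_single, one_mul]

lemma eq_single_of_weightedDeg_le {l : Fin n → ℕ} {s : Fin n}
    (h : weightedDeg T l ≤ l s * chainWt T s) : l = Pi.single s (l s) := by
  funext a
  rcases eq_or_ne a s with rfl | ha
  · simp
  have hpair : l a * chainWt T a + l s * chainWt T s ≤ weightedDeg T l := by
    rw [← Finset.sum_pair (f := fun a => l a * chainWt T a) ha]
    exact Finset.sum_le_sum_of_subset (Finset.subset_univ _)
  have : l a * chainWt T a = 0 := by omega
  simpa [ha] using (Nat.mul_eq_zero.mp this).resolve_right (chainWt_pos T a).ne'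

lemma memR_iff {i : Fin n} {l : Fin n → ℕ} :
    memR T i l ↔ (∀ a ∉ (clanSet T i).erase i, l a = 0) ∧ weightedDeg T l ≤ chainWt T i :=
  and_congr_right fun hl => by rw [weightedDeg_eq_sum_of_support T hl]

lemma memR_zero_iff {l : Fin n → ℕ} : memR T 0 l ↔ l = 0 := by
  refine ⟨fun h => funext fun a => h.1 a (by simp), ?_⟩
  rintro rfl
  simp [memR]

lemma memR_add_sub_single {s t : Fin n} {j l : Fin n → ℕ} (hj : memR T s j) (hl : memR T t l)
    (hls : l s ≠ 0) : memR T t (j + (l - Pi.single s 1)) := by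
  rw [memR_iff] at hj hl ⊢
  have hs : s ∈ (clanSet T t).erase t := by_contra fun h => hls (hl.1 s h)
  have hst : s < t :=
    (le_of_mem_clanSet T (Finset.mem_of_mem_erase hs)).lt_of_ne (Finset.ne_of_mem_erase hs)
  refine ⟨fun a ha => ?_, ?_⟩
  · have hja : j a = 0 := hj.1 a fun has => ha <| Finset.mem_erase.mpr
      ⟨((le_of_mem_clanSet T (Finset.mem_of_mem_erase has)).trans_lt hst).ne,
        clanSet_subset_of_mem T (Finset.mem_of_mem_erase hs) (Finset.mem_of_mem_erase has)⟩
    simp [hja, hl.1 a ha]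
  · have := weightedDeg_sub_single_add T hls
    rw [weightedDeg_add]
    omega

noncomputable def upBasis : (Σ i, {l : Fin n → ℕ // memR T i l}) → DiffOp n :=
  fun p => mXpow p.2.1 * pd p.1

lemma lie_upBasis_mem_span (p q : Σ i, {l : Fin n → ℕ // memR T i l}) :
    ⁅upBasis T p, upBasis T q⁆ ∈ Submodule.span ℂ (Set.range (upBasis T)) := by
  obtain ⟨s, j, hj⟩ := p
  obtain ⟨t, l, hl⟩ := q
  rw [upBasis, upBasis, lie_mXpow_mul_pd]
  refine sub_mem ?_ ?_
  · rcases eq_or_ne (l s) 0 with hls | hls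
    · simp [hls]
    · exact Submodule.smul_mem _ _
        (Submodule.subset_span ⟨⟨t, _, memR_add_sub_single T hj hl hls⟩, rfl⟩)
  · rcases eq_or_ne (j t) 0 with hjt | hjt
    · simp [hjt]
    · exact Submodule.smul_mem _ _
        (Submodule.subset_span ⟨⟨s, _, memR_add_sub_single T hl hj hjt⟩, rfl⟩)

lemma memR_single_parent {i : Fin n} (hi : i ≠ 0) :
    memR T i (Pi.single (T.parent i) (T.weight i)) := by
  rw [memR_iff, clanSet_erase_self T hi, weightedDeg_single, chainWt_of_ne_zero T hi, mul_comm]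
  refine ⟨fun a ha => ?_, le_rfl⟩
  have : a ≠ T.parent i := fun h => ha (h ▸ self_mem_clanSet T _)
  simp [this]

lemma upGens_subset_range_upBasis : upGens T ⊆ Set.range (upBasis T) := by
  rintro A (rfl | ⟨i, hi, rfl⟩)
  · exact ⟨⟨0, 0, (memR_zero_iff T).mpr rfl⟩, by simp [upBasis, mXpow_zero]⟩
  · exact ⟨⟨i, _, memR_single_parent T hi⟩, by simp [upBasis, mXpow_single]⟩

lemma exists_memR_le_of_chainWt_le {p : Fin n} {l : Fin n → ℕ}
    (hl : ∀ a ∉ (clanSet T p).erase p, l a = 0) (h : chainWt T p ≤ weightedDeg T l) :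
    ∃ m ≤ l, memR T p m ∧ weightedDeg T m = chainWt T p := by
  have hsub : ∀ a ∉ clanSet T p, a ∉ (clanSet T p).erase p :=
    fun a ha h => ha (Finset.mem_of_mem_erase h)
  rw [weightedDeg_eq_sum_of_support T fun a ha => hl a (hsub a ha)] at h
  obtain ⟨m, hml, hm⟩ := Finset.exists_le_sum_mul_eq_of_dvd (chainWt T) (clanSet T p)
    (fun a ha b hb hab => chainWt_dvd_of_mem_clanSet T (mem_clanSet_of_le T ha hb hab)) l _
    (fun a ha => chainWt_dvd_of_mem_clanSet T ha) h
  have hm0 : ∀ a ∉ (clanSet T p).erase p, m a = 0 :=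
    fun a ha => Nat.eq_zero_of_le_zero (hl a ha ▸ hml a)
  have hdeg : weightedDeg T m = chainWt T p := by
    rw [weightedDeg_eq_sum_of_support T fun a ha => hm0 a (hsub a ha), hm]
  exact ⟨m, hml, (memR_iff T).mpr ⟨hm0, hdeg.le⟩, hdeg⟩

lemma mXpow_mul_pd_mem_upL0_of_weightedDeg_eq {i : Fin n} (hi : i ≠ 0)
    (hp : ∀ m, memR T (T.parent i) m → mXpow m * pd (T.parent i) ∈ upL0 T)
    {l : Fin n → ℕ} (hl : ∀ a ∉ clanSet T (T.parent i), l a = 0)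
    (hdeg : weightedDeg T l = chainWt T i) : mXpow l * pd i ∈ upL0 T := by
  set p := T.parent i
  have hci : chainWt T i = chainWt T p * T.weight i := chainWt_of_ne_zero T hi
  -- `[x^m ∂_{x_p}, x^(l - m + e_p) ∂_{x_i}]` is a multiple of `x^l ∂_{x_i}`: induct on `d - l p`
  obtain ⟨k, hk⟩ : ∃ k, T.weight i - l p = k := ⟨_, rfl⟩
  induction k generalizing l with
  | zero =>
    have hlp : l p = T.weight i := by
      have := mul_chainWt_le_weightedDeg T l p
      rw [hdeg, hci, mul_comm] at this
      have := Nat.le_of_mul_le_mul_left this (chainWt_pos T p)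
      omega
    have hsingle := eq_single_of_weightedDeg_le T (s := p) (by rw [hdeg, hci, hlp, mul_comm])
    rw [hsingle, hlp, mXpow_single]
    exact LieSubalgebra.subset_lieSpan (Or.inr ⟨i, hi, rfl⟩)
  | succ k ih =>
    have hpl : Pi.single p (l p) ≤ l := fun a => by
      rcases eq_or_ne a p with rfl | ha <;> simp [*]
    have hl₀ : ∀ a ∉ (clanSet T p).erase p, (l - Pi.single p (l p) : Fin n → ℕ) a = 0 :=
      fun a ha => by
        rcases eq_or_ne a p with rfl | hap
        · simp
        · simp [hap, hl a fun h => ha (Finset.mem_erase.mpr ⟨hap, h⟩)]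
    have hdeg₀ : chainWt T p ≤ weightedDeg T (l - Pi.single p (l p)) := by
      have := weightedDeg_add T (l - Pi.single p (l p)) (Pi.single p (l p))
      rw [tsub_add_cancel_of_le hpl, weightedDeg_single, hdeg, hci] at this
      have : (l p + 1) * chainWt T p ≤ T.weight i * chainWt T p :=
        Nat.mul_le_mul_right _ (by omega)
      nlinarith
    obtain ⟨m, hml, hm, hmdeg⟩ := exists_memR_le_of_chainWt_le T hl₀ hdeg₀
    have hmp : m p = 0 := hm.1 p (by simp)
    have hmi : m i = 0 := hm.1 i fun h =>
      (le_of_mem_clanSet T (Finset.mem_of_mem_erase h)).not_gt (T.parent_lt i hi)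
    have hml' : m ≤ l := hml.trans tsub_le_self
    have hdeg' : weightedDeg T (l - m) + weightedDeg T m = weightedDeg T l := by
      rw [← weightedDeg_add, tsub_add_cancel_of_le hml']
    rw [← add_tsub_cancel_of_le hml']
    refine mXpow_add_mul_pd_mem (upL0 T) (hp m hm) hmi (ih ?_ (fun a ha => ?_) ?_)
    · rw [weightedDeg_add, weightedDeg_single]
      omega
    · have hap : a ≠ p := fun h => ha (h ▸ self_mem_clanSet T p)
      simp [hap, hl a ha]
    · simp [hmp]
      omega

lemma mXpow_mul_pd_mem_upL0 {i : Fin n} {l : Fin n → ℕ} (hl : memR T i l) :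
    mXpow l * pd i ∈ upL0 T := by
  have hpd0 : pd 0 ∈ upL0 T := LieSubalgebra.subset_lieSpan (Or.inl rfl)
  induction i using T.parent_induction generalizing l with
  | h i ih =>
    rcases eq_or_ne i 0 with rfl | hi
    · rwa [(memR_zero_iff T).mp hl, mXpow_zero, one_mul]
    obtain ⟨hsupp, hdeg⟩ := (memR_iff T).mp hl
    rw [clanSet_erase_self T hi] at hsupp
    -- raise the exponent of `x_1` to reach top degree, then come back down with `∂_{x_1}`
    refine mXpow_mul_pd_mem_of_add_single (upL0 T) hpd0 (chainWt T i - weightedDeg T l)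
      (mXpow_mul_pd_mem_upL0_of_weightedDeg_eq T hi (fun m hm => ih hi hm) (fun a ha => ?_) ?_)
    · have ha0 : a ≠ 0 := fun h => ha (h ▸ zero_mem_clanSet T _)
      simp [hsupp a ha, ha0]
    · rw [weightedDeg_add, weightedDeg_single, chainWt_zero]
      omega

lemma upL0_toSubmodule_eq_span :
    (upL0 T).toSubmodule = Submodule.span ℂ (Set.range (upBasis T)) :=
  LieSubalgebra.toSubmodule_lieSpan_eq_span (upGens_subset_range_upBasis T)
    (Set.range_subset_iff.mpr fun p => mXpow_mul_pd_mem_upL0 T p.2.2)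
    (by rintro _ ⟨p, rfl⟩ _ ⟨q, rfl⟩; exact lie_upBasis_mem_span T p q)

lemma linearIndependent_upBasis : LinearIndependent ℂ (upBasis T) := by
  have hinj : Function.Injective fun p : Σ i, {l : Fin n → ℕ // memR T i l} => (p.1, p.2.1) := by
    rintro ⟨i, l, _⟩ ⟨i', l', _⟩ h
    simp only [Prod.mk.injEq] at h
    obtain ⟨rfl, rfl⟩ := h
    rfl
  exact (linearIndependent_mXpow_mul_pd (n := n)).comp
    (fun p : Σ i, {l : Fin n → ℕ // memR T i l} => (p.1, p.2.1)) hinj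

lemma finite_memR (i : Fin n) : {l | memR T i l}.Finite := by
  refine (Set.Finite.pi fun _ => Set.finite_Iic (chainWt T i)).subset fun l hl a _ => ?_
  calc l a ≤ l a * chainWt T a := Nat.le_mul_of_pos_right _ (chainWt_pos T a)
    _ ≤ weightedDeg T l := mul_chainWt_le_weightedDeg T l a
    _ ≤ chainWt T i := ((memR_iff T).mp hl).2

lemma finrank_upL0 : Module.finrank ℂ (upL0 T) = ∑ i, ellCard T i := by
  have : ∀ i, Finite {l // memR T i l} := fun i => (finite_memR T i).to_subtype
  have := Fintype.ofFinite (Σ i, {l // memR T i l})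
  change Module.finrank ℂ (upL0 T).toSubmodule = _
  rw [upL0_toSubmodule_eq_span, finrank_span_eq_card (linearIndependent_upBasis T),
    Fintype.card_eq_nat_card, Nat.card_sigma]
  rfl

lemma ellCard_zero : ellCard T 0 = 1 := by
  rw [ellCard, Nat.card_congr (Equiv.subtypeEquivRight fun _ => memR_zero_iff T), Nat.card_unique]

end TreeDiagram

/-- Proposition 2.1. -/
theorem upL0_dimension (n : ℕ) [NeZero n] (T : TreeDiagram n) :
    Module.finrank ℂ ↥(upL0 T) =
      1 + ∑ i ∈ Finset.univ.filter (fun i : Fin n => i ≠ 0), ellCard T i := by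
  rw [finrank_upL0, Finset.filter_ne', ← ellCard_zero T,
    Finset.add_sum_erase _ _ (Finset.mem_univ 0)]
end

section
/- Let T^d=(N,E,d) be a tree diagram with n nodes, H = Σ_{i=1}^n ℂ x_i∂_{x_i}, and ℒ_1(T^d) = H + ℒ_0(T^d). Then: (1) ℒ_0(T^d) is a Lie ideal of ℒ_1(T^d); (2) ℒ_0(T^d) is a direct sum of one-dimensional root subspaces with respect to the adjoint action of H (i.e., it has a basis of vectors u for which there exists a nonzero linear functional α on H with [h,u]=α(h)u for all h∈H, distinct basis vectors having distinct roots); (3) every abelian ideal of ℒ_1(T^d) is a direct sum of some of these one-dimensional root subspaces of ℒ_0(T^d). -/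
attribute [local instance 100] LieRing.ofAssociativeRing

/-!
Every generator of `ℒ_0` is a monomial vector field `x^a ∂_s` in which only variables `x_t` with
`t > s` occur (parents precede their children), and such triangular monomials span a Lie
subalgebra. Each is an `H`-root vector of root `a - e_s`, and these roots are nonzero and
distinct. Since `ad h` is a derivation rescaling every generator, `ℒ_0` is `H`-stable, and an
`H`-stable subspace of a sum of root lines with distinct roots is spanned by the lines it
contains: a generic `h ∈ H` separates the roots, and Lagrange interpolation in `ad h` projects
onto each line. The same argument inside `ℒ_1 = H ⊕ ℒ_0` shows that an abelian ideal `I` is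
`(I ∩ H) ⊕ (sum of root lines)`. Finally `I ∩ H = 0`: every generator root vanishes on
`h ∈ I ∩ H`, and the roots `-e_r` at the tips and `d_j e_j - e_{p(j)}` along the edges vanish
simultaneously only at `h = 0`, by induction from the tips to the root.
-/

section WeightVectors

variable {K V H ι : Type*} [Field K] [AddCommGroup V] [Module K V]

theorem Submodule.aeval_apply_mem {f : Module.End K V} {p : Submodule K V}
    (hp : ∀ x ∈ p, f x ∈ p) (q : Polynomial K) {x : V} (hx : x ∈ p) :
    Polynomial.aeval f q x ∈ p := by
  induction q using Polynomial.induction_on generalizing x with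
  | C a => simpa [Module.algebraMap_end_apply] using p.smul_mem a hx
  | add q r hq hr => simpa using add_mem (hq hx) (hr hx)
  | monomial k a ih =>
    rw [pow_succ, ← mul_assoc, map_mul, Polynomial.aeval_X, Module.End.mul_apply]
    exact ih (hp x hx)

theorem Submodule.mem_of_sum_mem_of_eigenvectors {f : Module.End K V} {p : Submodule K V}
    (hp : ∀ x ∈ p, f x ∈ p) {s : Finset ι} {y : ι → V} {μ : ι → K} (hμ : Set.InjOn μ s)
    (hy : ∀ k ∈ s, f (y k) = μ k • y k) (hsum : ∑ k ∈ s, y k ∈ p) {k : ι} (hk : k ∈ s) :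
    y k ∈ p := by
  classical
  have aeval_sum (q : Polynomial K) :
      Polynomial.aeval f q (∑ m ∈ s, y m) = ∑ m ∈ s, q.eval (μ m) • y m := by
    refine (map_sum _ _ _).trans (Finset.sum_congr rfl fun m hm => ?_)
    rcases eq_or_ne (y m) 0 with hym | hym
    · simp [hym]
    · exact Module.End.aeval_apply_of_hasEigenvector
        ⟨Module.End.mem_eigenspace_iff.2 (hy m hm), hym⟩
  -- the Lagrange polynomial of `μ` at `k`, evaluated at `f`, projects onto `y k`
  have hmem := aeval_apply_mem hp (Lagrange.basis s μ k) hsum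
  rwa [aeval_sum, Finset.sum_eq_single k
    (fun m hm hmk => by rw [Lagrange.eval_basis_of_ne (Ne.symm hmk) hm, zero_smul])
    (fun hk' => absurd hk hk'), Lagrange.eval_basis_self hμ hk, one_smul] at hmem

variable [Infinite K] [AddCommGroup H] [Module K H]

theorem Submodule.mem_of_sum_mem_of_weightVectors (ρ : H → Module.End K V) {p : Submodule K V}
    (hp : ∀ h, ∀ x ∈ p, ρ h x ∈ p) {s : Finset ι} {y : ι → V} {α : ι → Module.Dual K H}
    (hα : Set.InjOn α s) (hy : ∀ k ∈ s, ∀ h, ρ h (y k) = α k h • y k)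
    (hsum : ∑ k ∈ s, y k ∈ p) {k : ι} (hk : k ∈ s) : y k ∈ p := by
  -- some `h` separates the finitely many weights, reducing to the single endomorphism `ρ h`
  obtain ⟨h, hh⟩ := Module.Dual.exists_forall_ne_zero_of_forall_exists
    (fun q : s.offDiag => α q.1.1 - α q.1.2) fun q => by
      by_contra! hq
      obtain ⟨hq₁, hq₂, hne⟩ := Finset.mem_offDiag.1 q.2
      exact hne (hα hq₁ hq₂ (sub_eq_zero.1 (LinearMap.ext hq)))
  refine mem_of_sum_mem_of_eigenvectors (hp h) (fun k₁ hk₁ k₂ hk₂ heq => ?_)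
    (fun m hm => hy m hm h) hsum hk
  by_contra hne
  exact hh ⟨(k₁, k₂), Finset.mem_offDiag.2 ⟨hk₁, hk₂, hne⟩⟩ (sub_eq_zero.2 heq)

theorem Submodule.le_inf_sup_span_of_weightVectors (ρ : H → Module.End K V)
    {p V₀ : Submodule K V} (hp : ∀ h, ∀ x ∈ p, ρ h x ∈ p) (hV₀ : ∀ h, ∀ x ∈ V₀, ρ h x = 0)
    {w : ι → V} {α : ι → Module.Dual K H} (hα : Function.Injective α) (hα₀ : ∀ k, α k ≠ 0)
    (hw : ∀ k h, ρ h (w k) = α k h • w k) (hle : p ≤ V₀ ⊔ span K (Set.range w)) :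
    p ≤ (p ⊓ V₀) ⊔ span K (w '' {k | w k ∈ p}) := by
  intro x hx
  obtain ⟨x₀, hx₀, u, hu, rfl⟩ := mem_sup.1 (hle hx)
  obtain ⟨c, rfl⟩ := Finsupp.mem_span_range_iff_exists_finsupp.1 hu
  have hcomp : ∀ k ∈ c.support, c k • w k ∈ p := by
    intro k hk
    obtain ⟨h, hh⟩ : ∃ h, α k h ≠ 0 := by
      by_contra! h
      exact hα₀ k (LinearMap.ext h)
    -- `ρ h` kills `x₀` and rescales the other components by their weights
    have hsum : ∑ m ∈ c.support, α m h • c m • w m ∈ p := by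
      convert hp h _ hx using 1
      simp [Finsupp.sum, hV₀ h x₀ hx₀, hw, smul_comm (c _)]
    have := mem_of_sum_mem_of_weightVectors ρ hp hα.injOn
      (fun m _ h' => by simp only [map_smul, hw, smul_comm (α m h')]) hsum hk
    exact (p.smul_mem_iff hh).1 this
  have hu : (c.sum fun k a => a • w k) ∈ p := sum_mem hcomp
  refine mem_sup.2 ⟨x₀, ⟨(p.add_mem_iff_left hu).1 hx, hx₀⟩, _,
    sum_mem fun k hk => smul_mem _ _ (subset_span ⟨k, ?_, rfl⟩), rfl⟩
  exact (p.smul_mem_iff (Finsupp.mem_support_iff.1 hk)).1 (hcomp k hk)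

end WeightVectors

section LieSpan

variable {R L : Type*} [CommRing R] [LieRing L] [LieAlgebra R L] {s : Set L}

open Submodule in
theorem LieSubalgebra.coe_lieSpan_eq_span_of_forall_lie_mem
    (hs : ∀ x ∈ s, ∀ y ∈ s, ⁅x, y⁆ ∈ span R s) : lieSpan R L s = span R s := by
  suffices ∀ {x y}, x ∈ span R s → y ∈ span R s → ⁅x, y⁆ ∈ span R s by
    refine le_antisymm ?_ submodule_span_le_lieSpan
    change _ ≤ ({ span R s with lie_mem' := this } : LieSubalgebra R L)
    rw [lieSpan_le]
    exact subset_span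
  intro x y hx hy
  induction hx, hy using span_induction₂ with
  | mem_mem x y hx hy => exact hs x hx y hy
  | zero_left y hy => simp
  | zero_right x hx => simp
  | add_left x y z _ _ _ hx hy => simpa using add_mem hx hy
  | add_right x y z _ _ _ hx hy => simpa using add_mem hx hy
  | smul_left r x y _ _ h => simpa using smul_mem _ r h
  | smul_right r x y _ _ h => simpa using smul_mem _ r h

theorem LieSubalgebra.lie_mem_lieSpan_of_forall_lie_mem {x : L}
    (hx : ∀ g ∈ s, ⁅x, g⁆ ∈ lieSpan R L s) {y : L} (hy : y ∈ lieSpan R L s) :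
    ⁅x, y⁆ ∈ lieSpan R L s := by
  induction hy using lieSpan_induction with
  | mem g hg => exact hx g hg
  | zero => simp
  | add y z _ _ hy hz => simpa using add_mem hy hz
  | smul r y _ hy => simpa using (lieSpan R L s).smul_mem r hy
  | lie y z hy' hz' hy hz =>
    rw [leibniz_lie]
    exact add_mem (lie_mem _ hy hz') (lie_mem _ hy' hz)

end LieSpan

open MvPolynomial

theorem MvPolynomial.pderiv_pderiv_comm {R σ : Type*} [CommRing R] (i j : σ)
    (f : MvPolynomial σ R) : pderiv i (pderiv j f) = pderiv j (pderiv i f) := by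
  classical
  have : ⁅(pderiv i : Derivation R (MvPolynomial σ R) (MvPolynomial σ R)), pderiv j⁆ =
      (0 : Derivation R (MvPolynomial σ R) (MvPolynomial σ R)) := by
    refine derivation_ext fun k => ?_
    rw [Derivation.commutator_apply]
    simp only [pderiv_X, Pi.single_apply]
    split_ifs <;> simp
  simpa [Derivation.commutator_apply, sub_eq_zero] using congr($this f)

section VectorFields

variable {n : ℕ}

noncomputable def vecField (p : MvPolynomial (Fin n) ℂ) (i : Fin n) : DiffOp n :=
  LinearMap.mulLeft ℂ p * pd i

theorem vecField_apply (p f : MvPolynomial (Fin n) ℂ) (i : Fin n) :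
    vecField p i f = p * pderiv i f := rfl

theorem lie_vecField_vecField (p q : MvPolynomial (Fin n) ℂ) (i j : Fin n) :
    ⁅vecField p i, vecField q j⁆ = vecField (p * pderiv i q) j - vecField (q * pderiv j p) i := by
  refine LinearMap.ext fun f => ?_
  simp only [Ring.lie_def, LinearMap.sub_apply, Module.End.mul_apply, vecField_apply, pderiv_mul,
    pderiv_pderiv_comm i j f]
  ring

theorem vecField_smul (c : ℂ) (p : MvPolynomial (Fin n) ℂ) (i : Fin n) :
    vecField (c • p) i = c • vecField p i :=
  LinearMap.ext fun f => by simp [vecField_apply]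

noncomputable def monOp (a : Fin n →₀ ℕ) (s : Fin n) : DiffOp n := vecField (monomial a 1) s

theorem lie_monOp_monOp (a b : Fin n →₀ ℕ) (i j : Fin n) :
    ⁅monOp a i, monOp b j⁆ = (b i : ℂ) • monOp (a + (b - Finsupp.single i 1)) j
      - (a j : ℂ) • monOp (b + (a - Finsupp.single j 1)) i := by
  simp only [monOp, lie_vecField_vecField, pderiv_monomial, monomial_mul, ← vecField_smul,
    smul_monomial, smul_eq_mul, one_mul, mul_one]

theorem lie_mX_mul_pd_monOp (i : Fin n) (a : Fin n →₀ ℕ) (s : Fin n) :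
    ⁅mX i * pd i, monOp a s⁆ = ((a i : ℂ) - if i = s then 1 else 0) • monOp a s := by
  change ⁅vecField (X i) i, _⁆ = _
  rw [monOp, lie_vecField_vecField, X_mul_pderiv_monomial, ← Nat.cast_smul_eq_nsmul ℂ,
    vecField_smul, pderiv_X]
  split_ifs with h
  · subst h
    simp only [Pi.single_eq_same, mul_one]
    module
  · simp [h, vecField]

theorem monOp_apply_X (a : Fin n →₀ ℕ) (s t : Fin n) :
    monOp a s (X t) = if t = s then monomial a 1 else 0 := by
  rw [monOp, vecField_apply, pderiv_X]
  rcases eq_or_ne t s with rfl | h <;> simp [*]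

theorem linearIndependent_monOp :
    LinearIndependent ℂ fun q : (Fin n →₀ ℕ) × Fin n => monOp q.1 q.2 := by
  classical
  have hsingle := (Pi.linearIndependent_single (fun (_ : Fin n) (a : Fin n →₀ ℕ) =>
    (monomial a 1 : MvPolynomial (Fin n) ℂ)) fun _ => (basisMonomials _ ℂ).linearIndependent).comp
      _ ((Equiv.prodComm _ _).trans (Equiv.sigmaEquivProd _ _).symm).injective
  refine LinearIndependent.of_comp (LinearMap.pi fun t => LinearMap.applyₗ (X t)) ?_
  convert hsingle using 1
  · ext q t
    simp [monOp_apply_X, Pi.single_apply]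
  · rfl

theorem mX_mul_pd_eq_monOp (i : Fin n) : mX i * pd i = monOp (Finsupp.single i 1) i := rfl

theorem linearIndependent_mX_mul_pd : LinearIndependent ℂ fun i : Fin n => mX i * pd i :=
  linearIndependent_monOp.comp (fun i => (Finsupp.single i 1, i)) fun _ _ h => (Prod.ext_iff.1 h).2

noncomputable def cartanBasis : Module.Basis (Fin n) ℂ (Hcart n) :=
  .span linearIndependent_mX_mul_pd

theorem coe_cartanBasis (i : Fin n) : (cartanBasis i : DiffOp n) = mX i * pd i :=
  Module.Basis.coe_span_apply _ i

noncomputable def monOpRoot (a : Fin n →₀ ℕ) (s : Fin n) : Module.Dual ℂ (Hcart n) :=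
  ∑ i, (a i : ℂ) • cartanBasis.coord i - cartanBasis.coord s

theorem monOpRoot_cartanBasis (a : Fin n →₀ ℕ) (s i : Fin n) :
    monOpRoot a s (cartanBasis i) = (a i : ℂ) - if i = s then 1 else 0 := by
  simp [monOpRoot, Finsupp.single_apply]

theorem lie_monOp_eq_monOpRoot_smul (h : Hcart n) (a : Fin n →₀ ℕ) (s : Fin n) :
    ⁅(h : DiffOp n), monOp a s⁆ = monOpRoot a s h • monOp a s := by
  have : LinearMap.applyₗ (monOp a s) ∘ₗ (LieAlgebra.ad ℂ (DiffOp n) : DiffOp n →ₗ[ℂ] _) ∘ₗ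
      (Hcart n).subtype = (monOpRoot a s).smulRight (monOp a s) :=
    cartanBasis.ext fun i => by
      simpa [coe_cartanBasis, monOpRoot_cartanBasis] using lie_mX_mul_pd_monOp i a s
  simpa using congr($this h)

theorem lie_eq_zero_of_mem_Hcart (h : Hcart n) {x : DiffOp n} (hx : x ∈ Hcart n) :
    ⁅(h : DiffOp n), x⁆ = 0 := by
  induction hx using Submodule.span_induction with
  | mem x hx =>
    obtain ⟨i, rfl⟩ := hx
    have : monOpRoot (Finsupp.single i 1) i = 0 :=
      cartanBasis.ext fun j => by simp [monOpRoot_cartanBasis, Finsupp.single_apply, eq_comm]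
    change ⁅(h : DiffOp n), monOp (Finsupp.single i 1) i⁆ = 0
    rw [lie_monOp_eq_monOpRoot_smul, this, LinearMap.zero_apply, zero_smul]
  | zero => simp
  | add x y _ _ hx hy => simp [hx, hy]
  | smul c x _ hx => simp [hx]

theorem monOp_ne_zero (a : Fin n →₀ ℕ) (s : Fin n) : monOp a s ≠ 0 :=
  linearIndependent_monOp.ne_zero (a, s)

theorem pd_eq_monOp (r : Fin n) : pd r = monOp 0 r := by
  simp [monOp, vecField, ← Module.End.one_eq_id]

theorem mX_pow_mul_pd_eq_monOp (j : Fin n) (w : ℕ) (i : Fin n) :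
    mX j ^ w * pd i = monOp (Finsupp.single j w) i := by
  rw [monOp, vecField, ← X_pow_eq_monomial, mX, LinearMap.pow_mulLeft]

end VectorFields

/-- `x^exp ∂_idx` with `exp` supported on the variables after `idx`. These span a Lie subalgebra
containing `ℒ_0`, and their roots `exp - e_idx` are nonzero and pairwise distinct because their
`idx`-coordinate is `-1`. -/
@[ext]
structure TriangularMonomial (n : ℕ) where
  exp : Fin n →₀ ℕ
  idx : Fin n
  idx_lt : ∀ t ∈ exp.support, idx < t

namespace TriangularMonomial

variable {n : ℕ}

noncomputable def op (q : TriangularMonomial n) : DiffOp n := monOp q.exp q.idx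

noncomputable def root (q : TriangularMonomial n) : Module.Dual ℂ (Hcart n) :=
  monOpRoot q.exp q.idx

theorem exp_idx (q : TriangularMonomial n) : q.exp q.idx = 0 := by
  by_contra h
  exact lt_irrefl _ (q.idx_lt _ (Finsupp.mem_support_iff.2 h))

theorem lie_op_eq_root_smul (q : TriangularMonomial n) (h : Hcart n) :
    ⁅(h : DiffOp n), q.op⁆ = q.root h • q.op :=
  lie_monOp_eq_monOpRoot_smul h q.exp q.idx

theorem root_cartanBasis (q : TriangularMonomial n) (i : Fin n) :
    q.root (cartanBasis i) = (q.exp i : ℂ) - if i = q.idx then 1 else 0 :=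
  monOpRoot_cartanBasis q.exp q.idx i

theorem root_ne_zero (q : TriangularMonomial n) : q.root ≠ 0 := fun h => by
  simpa [root_cartanBasis, q.exp_idx] using congr($h (cartanBasis q.idx))

theorem root_injective : Function.Injective (root : TriangularMonomial n → _) := by
  intro q r h
  have hval (i : Fin n) := congr($h (cartanBasis i))
  simp only [root_cartanBasis] at hval
  have hidx : q.idx = r.idx := by
    by_contra hne
    have h₁ := hval q.idx
    rw [q.exp_idx, if_pos rfl, if_neg hne] at h₁
    have h₂ : ((r.exp q.idx + 1 : ℕ) : ℂ) = 0 := by push_cast; linear_combination -h₁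
    exact Nat.succ_ne_zero (r.exp q.idx) (by exact_mod_cast h₂)
  refine TriangularMonomial.ext (Finsupp.ext fun i => ?_) hidx
  have h₁ := hval i
  rw [hidx, sub_left_inj] at h₁
  exact_mod_cast h₁

theorem linearIndependent_op : LinearIndependent ℂ (op : TriangularMonomial n → DiffOp n) := by
  have hinj : Function.Injective fun q : TriangularMonomial n => (q.exp, q.idx) :=
    fun q r h => TriangularMonomial.ext (Prod.ext_iff.1 h).1 (Prod.ext_iff.1 h).2
  exact (linearIndependent_monOp.comp _ hinj :)

theorem smul_monOp_mem_span_op (q r : TriangularMonomial n) :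
    (r.exp q.idx : ℂ) • monOp (q.exp + (r.exp - Finsupp.single q.idx 1)) r.idx ∈
      Submodule.span ℂ (Set.range op) := by
  rcases eq_or_ne (r.exp q.idx) 0 with h | h
  · simp [h]
  refine Submodule.smul_mem _ _ (Submodule.subset_span ⟨⟨_, r.idx, fun t ht => ?_⟩, rfl⟩)
  rcases Finset.mem_union.1 (Finsupp.support_add ht) with ht | ht
  · exact (r.idx_lt _ (Finsupp.mem_support_iff.2 h)).trans (q.idx_lt t ht)
  · exact r.idx_lt t (Finsupp.support_tsub ht)

theorem lie_op_op_mem_span_op (q r : TriangularMonomial n) :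
    ⁅q.op, r.op⁆ ∈ Submodule.span ℂ (Set.range op) := by
  rw [op, op, lie_monOp_monOp]
  exact sub_mem (smul_monOp_mem_span_op q r) (smul_monOp_mem_span_op r q)

end TriangularMonomial

section TreeDiagram

variable {n : ℕ} [NeZero n]

theorem TreeDiagram.eq_zero_of_parent_eq_mul {R : Type*} [MulZeroClass R] (T : TreeDiagram n)
    {d : Fin n → R} (c : Fin n → R) (htip : ∀ r, IsTip T r → d r = 0)
    (hparent : ∀ j, j ≠ 0 → d (T.parent j) = c j * d j) (i : Fin n) : d i = 0 := by
  induction i using WellFoundedGT.induction with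
  | _ i ih =>
    by_cases hi : IsTip T i
    · exact htip i hi
    obtain ⟨j, hj, rfl⟩ : ∃ j, j ≠ 0 ∧ T.parent j = i := by simpa [IsTip] using hi
    rw [hparent j hj, ih j (T.parent_lt j hj), mul_zero]

theorem exists_op_eq_of_mem_downGens (T : TreeDiagram n) {g : DiffOp n} (hg : g ∈ downGens T) :
    ∃ q : TriangularMonomial n, q.op = g := by
  rcases hg with ⟨r, -, rfl⟩ | ⟨j, hj, rfl⟩
  · exact ⟨⟨0, r, by simp⟩, (pd_eq_monOp r).symm⟩
  · refine ⟨⟨Finsupp.single j (T.weight j), T.parent j, fun t ht => ?_⟩,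
      (mX_pow_mul_pd_eq_monOp _ _ _).symm⟩
    rw [Finset.mem_singleton.1 (Finsupp.support_single_subset ht)]
    exact T.parent_lt j hj

theorem downL0_le_span_op (T : TreeDiagram n) :
    (downL0 T).toSubmodule ≤ Submodule.span ℂ (Set.range TriangularMonomial.op) := by
  rw [← LieSubalgebra.coe_lieSpan_eq_span_of_forall_lie_mem (by
    rintro _ ⟨q, rfl⟩ _ ⟨r, rfl⟩
    exact q.lie_op_op_mem_span_op r)]
  exact LieSubalgebra.lieSpan_mono fun g hg => exists_op_eq_of_mem_downGens T hg

theorem lie_mem_downL0_of_mem_Hcart (T : TreeDiagram n) {h y : DiffOp n} (hh : h ∈ Hcart n)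
    (hy : y ∈ downL0 T) : ⁅h, y⁆ ∈ downL0 T := by
  refine LieSubalgebra.lie_mem_lieSpan_of_forall_lie_mem (fun g hg => ?_) hy
  obtain ⟨q, rfl⟩ := exists_op_eq_of_mem_downGens T hg
  rw [q.lie_op_eq_root_smul ⟨h, hh⟩]
  exact (downL0 T).smul_mem _ (LieSubalgebra.subset_lieSpan hg)

theorem lie_mem_downL0_of_mem_downL1 (T : TreeDiagram n) {x y : DiffOp n} (hx : x ∈ downL1 T)
    (hy : y ∈ downL0 T) : ⁅x, y⁆ ∈ downL0 T := by
  obtain ⟨h, hh, u, hu, rfl⟩ := Submodule.mem_sup.1 hx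
  rw [add_lie]
  exact add_mem (lie_mem_downL0_of_mem_Hcart T hh hy) ((downL0 T).lie_mem hu hy)

theorem span_op_downL0 (T : TreeDiagram n) :
    Submodule.span ℂ (Set.range fun q : {q : TriangularMonomial n // q.op ∈ downL0 T} => q.1.op) =
      (downL0 T).toSubmodule := by
  refine le_antisymm (Submodule.span_le.2 (by rintro _ ⟨q, rfl⟩; exact q.2)) ?_
  have := Submodule.le_inf_sup_span_of_weightVectors
    (fun h : Hcart n => LieAlgebra.ad ℂ (DiffOp n) h) (V₀ := ⊥)
    (fun h _ hx => lie_mem_downL0_of_mem_Hcart T h.2 hx) (by simp)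
    TriangularMonomial.root_injective TriangularMonomial.root_ne_zero
    (fun q h => q.lie_op_eq_root_smul h) (by simpa using downL0_le_span_op T)
  rwa [inf_bot_eq, bot_sup_eq, ← Subtype.range_coe_subtype, ← Set.range_comp] at this

theorem eq_zero_of_forall_monOpRoot_eq_zero (T : TreeDiagram n) (h : Hcart n)
    (hroot : ∀ a s, monOp a s ∈ downGens T → monOpRoot a s h = 0) : h = 0 := by
  refine cartanBasis.forall_coord_eq_zero_iff.1 (T.eq_zero_of_parent_eq_mul
    (fun j => (T.weight j : ℂ)) (fun r hr => ?_) (fun j hj => ?_))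
  · simpa [monOpRoot] using hroot 0 r (Or.inl ⟨r, hr, (pd_eq_monOp r).symm⟩)
  · have := hroot _ _ (Or.inr ⟨j, hj, (mX_pow_mul_pd_eq_monOp j (T.weight j) (T.parent j)).symm⟩)
    simp only [Module.Basis.coord_apply]
    simp [monOpRoot, Finsupp.single_apply] at this
    linear_combination -this

theorem IsAbelianIdeal.inf_Hcart_eq_bot {T : TreeDiagram n} {I : Submodule ℂ (DiffOp n)}
    (hI : IsAbelianIdeal (downL1 T) I) : I ⊓ Hcart n = ⊥ := by
  refine eq_bot_iff.2 fun h ⟨hhI, hhH⟩ => ?_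
  suffices (⟨h, hhH⟩ : Hcart n) = 0 from (Submodule.mem_bot ℂ).2 congr(Subtype.val $this)
  refine eq_zero_of_forall_monOpRoot_eq_zero T _ fun a s hg => ?_
  have hgL1 : monOp a s ∈ downL1 T := Submodule.mem_sup_right (LieSubalgebra.subset_lieSpan hg)
  have hβ : ⁅h, monOp a s⁆ = monOpRoot a s ⟨h, hhH⟩ • monOp a s :=
    lie_monOp_eq_monOpRoot_smul ⟨h, hhH⟩ a s
  -- a generator with `β h ≠ 0` would lie in `I` without commuting with `h`
  by_contra hβ₀
  have hgI : monOp a s ∈ I := by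
    have := hI.2.1 _ hgL1 h hhI
    rwa [← lie_skew, hβ, neg_mem_iff, I.smul_mem_iff hβ₀] at this
  have := hI.2.2 h hhI _ hgI
  rw [hβ, smul_eq_zero] at this
  exact this.elim hβ₀ (monOp_ne_zero a s)

end TreeDiagram

/-- Lemma 3.3. -/
theorem downL1_root_space_decomposition (n : ℕ) [NeZero n] (T : TreeDiagram n) :
    (∀ x ∈ downL1 T, ∀ y ∈ downL0 T, ⁅x, y⁆ ∈ downL0 T) ∧
    ∃ (ι : Type) (v : ι → DiffOp n) (α : ι → (↥(Hcart n) →ₗ[ℂ] ℂ)),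
      LinearIndependent ℂ v ∧
      Submodule.span ℂ (Set.range v) = (downL0 T).toSubmodule ∧
      (∀ k : ι, α k ≠ 0) ∧
      (∀ (k : ι) (h : ↥(Hcart n)), ⁅(h : DiffOp n), v k⁆ = α k h • v k) ∧
      Function.Injective α ∧
      ∀ I : Submodule ℂ (DiffOp n), IsAbelianIdeal (downL1 T) I →
        ∃ s : Set ι, I = Submodule.span ℂ (v '' s) := by
  have hroot_inj := TriangularMonomial.root_injective.comp
    (Subtype.val_injective (p := fun q : TriangularMonomial n => q.op ∈ downL0 T))
  refine ⟨fun x hx y hy => lie_mem_downL0_of_mem_downL1 T hx hy, _, _, _,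
    TriangularMonomial.linearIndependent_op.comp _ Subtype.val_injective, span_op_downL0 T,
    fun q => q.1.root_ne_zero, fun q h => q.1.lie_op_eq_root_smul h, hroot_inj, fun I hI => ?_⟩
  refine ⟨{q | q.1.op ∈ I}, le_antisymm ?_ (Submodule.span_le.2 fun _ ⟨_, hq, hv⟩ => hv ▸ hq)⟩
  have := Submodule.le_inf_sup_span_of_weightVectors
    (fun h : Hcart n => LieAlgebra.ad ℂ (DiffOp n) h) (p := I) (V₀ := Hcart n)
    (fun h _ hx => hI.2.1 _ (Submodule.mem_sup_left h.2) _ hx)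
    (fun h _ hx => lie_eq_zero_of_mem_Hcart h hx) hroot_inj (fun q => q.1.root_ne_zero)
    (fun q h => q.1.lie_op_eq_root_smul h) (by rw [span_op_downL0]; exact hI.1)
  rwa [hI.inf_Hcart_eq_bot, bot_sup_eq] at this
end

section
/- Let n≥2 and m_1,…,m_{n−1} be positive integers, and set m_0=1, x_0=1. For t∈ℂ and i∈{1,…,n}, let D_i = t Σ_{r=0}^{i−1} x_r^{m_r} ∂_{x_{r+1}}, an operator on ℂ[x_1,…,x_n]. Each D_i acts locally nilpotently on ℂ[x_1,…,x_n], so for every polynomial p the exponential e^{D_i}(p) = Σ_{k≥0} D_i^k(p)/k! is a finite sum, and θ(D_{n−1})(x_{n−1}^{m_{n−1}}) := Σ_{i≥1} ((−1)^{i−1}/i!) D_{n−1}^{i−1}(x_{n−1}^{m_{n−1}}) is a polynomial (θ(x)=(1−e^{−x})/x). Then the operator identity e^{D_n} = e^{D_{n−1}} ∘ e^{t·θ(D_{n−1})(x_{n−1}^{m_{n−1}}) ∂_{x_n}} holds, i.e., e^{D_n}(p) = e^{D_{n−1}}( e^{t·θ(D_{n−1})(x_{n−1}^{m_{n−1}})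 ∂_{x_n}}(p) ) for every p∈ℂ[x_1,…,x_n]. -/
noncomputable section

attribute [local instance 100] LieRing.ofAssociativeRing

variable {n : ℕ} [NeZero n]

end

/-
Write `A = D_{n-1}`, `y = x_n` and `g = x_{n-1}^{m_{n-1}}`, so that `D_n = A + t g ∂_y`, where `A`
kills `y` and commutes with `∂_y`, and `∂_y g = 0`. The exponential of a locally nilpotent
derivation is an algebra endomorphism, so it suffices to compare both sides on the variables.
A variable other than `y` lies in `ker ∂_y`, on which `A + t g ∂_y` acts as `A` and
`t θ(A)(g) ∂_y` vanishes. On `y` itself, `e^{A + t g ∂_y} y = y + t ψ(A) g` with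
`ψ(x) = (e^x - 1)/x`, while `e^A (y + t θ(A) g) = y + t (e^A θ(A)) g`, and `e^x θ(x) = ψ(x)`.
-/

section ChainFactorization

open MvPolynomial Finset
open scoped Nat

theorem Finset.sum_range_eq_of_forall_ge_eq_zero {M : Type*} [AddCommMonoid M]
    {f : ℕ → M} {N₁ N₂ : ℕ} (h₁ : ∀ k, N₁ ≤ k → f k = 0)
    (h₂ : ∀ k, N₂ ≤ k → f k = 0) :
    ∑ k ∈ range N₁, f k = ∑ k ∈ range N₂, f k := by
  have key : ∀ {a b : ℕ}, a ≤ b → (∀ k, a ≤ k → f k = 0) →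
      ∑ k ∈ range b, f k = ∑ k ∈ range a, f k := fun hab h =>
    (sum_subset (range_subset_range.2 hab) fun k _ hk => h k (by simpa using hk)).symm
  rcases le_total N₁ N₂ with h | h
  · exact (key h h₁).symm
  · exact key h h₂

theorem Finset.sum_range_sum_range_eq_sum_antidiagonal {M : Type*} [AddCommMonoid M] {N : ℕ}
    {F : ℕ → ℕ → M} (hF : ∀ i j, N ≤ i + j → F i j = 0) :
    ∑ i ∈ range N, ∑ j ∈ range N, F i j =
      ∑ k ∈ range N, ∑ ij ∈ antidiagonal k, F ij.1 ij.2 := by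
  simp_rw [Nat.sum_antidiagonal_eq_sum_range_succ F, sum_range_diag_flip]
  refine sum_congr rfl fun i _ =>
    (sum_subset (range_subset_range.2 (Nat.sub_le N i)) fun j _ hj => hF i j ?_).symm
  simp only [mem_range, not_lt] at hj
  omega

/-- The coefficient of `x ^ N` in `e ^ x * θ(x) = (e ^ x - 1) / x`. -/
theorem sum_antidiagonal_inv_factorial_mul_neg_one_pow (N : ℕ) :
    ∑ ij ∈ antidiagonal N, ((ij.1 ! : ℂ))⁻¹ * ((-1) ^ ij.2 * (((ij.2 + 1) ! : ℂ))⁻¹) =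
      (((N + 1) ! : ℂ))⁻¹ := by
  have halt : ∑ j ∈ range (N + 1), (-1 : ℂ) ^ (j + 1) * (N + 1).choose (j + 1) = -1 := by
    have h := congrArg (Int.cast : ℤ → ℂ)
      (Int.alternating_sum_range_choose_of_ne (n := N + 1) N.succ_ne_zero)
    push_cast at h
    rw [sum_range_succ'] at h
    simpa [eq_neg_iff_add_eq_zero] using h
  rw [← Nat.sum_antidiagonal_swap]
  simp only [Prod.fst_swap, Prod.snd_swap]
  rw [Nat.sum_antidiagonal_eq_sum_range_succ
    (fun j i => ((i ! : ℂ))⁻¹ * ((-1) ^ j * (((j + 1) ! : ℂ))⁻¹)) N]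
  have hterm : ∀ j ∈ range (N + 1),
      (((N - j) ! : ℂ))⁻¹ * ((-1) ^ j * (((j + 1) ! : ℂ))⁻¹) =
        -(((N + 1) ! : ℂ))⁻¹ * ((-1 : ℂ) ^ (j + 1) * (N + 1).choose (j + 1)) := by
    intro j hj
    have hjN : j + 1 ≤ N + 1 := by simpa [Nat.lt_succ_iff] using hj
    have hfac : ((N + 1) ! : ℂ) ≠ 0 := by exact_mod_cast (N + 1).factorial_ne_zero
    rw [Nat.cast_choose ℂ hjN, Nat.add_sub_add_right]
    field_simp
    ring
  rw [sum_congr rfl hterm, ← mul_sum, halt]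
  ring

section LocallyNilpotent

variable {M : Type} [AddCommGroup M] [Module ℂ M] {A B : Module.End ℂ M} {p q : M}

theorem LocNilpOn.add (hp : LocNilpOn A p) (hq : LocNilpOn A q) : LocNilpOn A (p + q) := by
  obtain ⟨N₁, h₁⟩ := hp
  obtain ⟨N₂, h₂⟩ := hq
  exact ⟨max N₁ N₂, fun k hk => by
    rw [map_add, h₁ k (le_of_max_le_left hk), h₂ k (le_of_max_le_right hk), add_zero]⟩

theorem LocNilpOn.smul (c : ℂ) (hp : LocNilpOn A p) : LocNilpOn A (c • p) :=
  let ⟨N, h⟩ := hp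
  ⟨N, fun k hk => by rw [map_smul, h k hk, smul_zero]⟩

theorem LocNilpOn.of_apply (h : LocNilpOn A (A p)) : LocNilpOn A p := by
  obtain ⟨N, h⟩ := h
  refine ⟨N + 1, fun k hk => ?_⟩
  obtain ⟨j, rfl⟩ : ∃ j, k = j + 1 := ⟨k - 1, by omega⟩
  rw [pow_succ, Module.End.mul_apply]
  exact h j (by omega)

theorem LocNilpOn.of_apply_eq_zero (h : A p = 0) : LocNilpOn A p :=
  LocNilpOn.of_apply ⟨0, fun k _ => by rw [h, map_zero]⟩

theorem expApply_eq_sum {N : ℕ} (h : ∀ k, N ≤ k → (A ^ k) p = 0) :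
    expApply A p = ∑ k ∈ range N, ((k ! : ℂ))⁻¹ • (A ^ k) p := by
  have hp : LocNilpOn A p := ⟨N, h⟩
  rw [expApply, dif_pos hp]
  exact sum_range_eq_of_forall_ge_eq_zero (fun k hk => by rw [hp.choose_spec k hk, smul_zero])
    (fun k hk => by rw [h k hk, smul_zero])

theorem thetaApply_eq_sum {N : ℕ} (h : ∀ k, N ≤ k → (A ^ k) p = 0) :
    thetaApply A p = ∑ k ∈ range N, ((-1) ^ k * (((k + 1) ! : ℂ))⁻¹) • (A ^ k) p := by
  have hp : LocNilpOn A p := ⟨N, h⟩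
  rw [thetaApply, dif_pos hp]
  exact sum_range_eq_of_forall_ge_eq_zero (fun k hk => by rw [hp.choose_spec k hk, smul_zero])
    (fun k hk => by rw [h k hk, smul_zero])

theorem expApply_eq_add_sum {N : ℕ} (h : ∀ k, N ≤ k → (A ^ k) (A p) = 0) :
    expApply A p = p + ∑ k ∈ range N, (((k + 1) ! : ℂ))⁻¹ • (A ^ k) (A p) := by
  have h' : ∀ k, N + 1 ≤ k → (A ^ k) p = 0 := fun k hk => by
    obtain ⟨j, rfl⟩ : ∃ j, k = j + 1 := ⟨k - 1, by omega⟩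
    rw [pow_succ, Module.End.mul_apply, h j (by omega)]
  rw [expApply_eq_sum h', sum_range_succ', add_comm]
  simp only [pow_succ, Module.End.mul_apply, pow_zero, Module.End.one_apply, Nat.factorial_zero,
    Nat.cast_one, inv_one, one_smul]

theorem expApply_of_apply_eq_zero (h : A p = 0) : expApply A p = p := by
  simpa using expApply_eq_add_sum (N := 0) fun k _ => by rw [h, map_zero]

theorem expApply_of_apply_apply_eq_zero (h : A (A p) = 0) : expApply A p = p + A p := by
  simpa using expApply_eq_add_sum (N := 1) fun k hk => by
    obtain ⟨j, rfl⟩ : ∃ j, k = j + 1 := ⟨k - 1, by omega⟩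
    rw [pow_succ, Module.End.mul_apply, h, map_zero]

theorem expApply_add (hp : LocNilpOn A p) (hq : LocNilpOn A q) :
    expApply A (p + q) = expApply A p + expApply A q := by
  obtain ⟨N₁, h₁⟩ := hp
  obtain ⟨N₂, h₂⟩ := hq
  have h₁' : ∀ k, N₁ + N₂ ≤ k → (A ^ k) p = 0 := fun k hk => h₁ k (by omega)
  have h₂' : ∀ k, N₁ + N₂ ≤ k → (A ^ k) q = 0 := fun k hk => h₂ k (by omega)
  rw [expApply_eq_sum fun k hk => by rw [map_add, h₁' k hk, h₂' k hk, add_zero],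
    expApply_eq_sum h₁', expApply_eq_sum h₂', ← sum_add_distrib]
  simp only [map_add, smul_add]

theorem thetaApply_smul (c : ℂ) (hp : LocNilpOn A p) :
    thetaApply A (c • p) = c • thetaApply A p := by
  obtain ⟨N, h⟩ := hp
  rw [thetaApply_eq_sum (N := N) fun k hk => by rw [map_smul, h k hk, smul_zero],
    thetaApply_eq_sum h, smul_sum]
  simp only [map_smul, smul_comm c]

theorem thetaApply_mem {S : Submodule ℂ M} (hA : Set.MapsTo A S S) (hp : p ∈ S) :
    thetaApply A p ∈ S := by
  have hpow : ∀ k, (A ^ k) p ∈ S := fun k => by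
    rw [Module.End.coe_pow]
    exact Set.MapsTo.iterate hA k hp
  unfold thetaApply
  split_ifs
  · exact S.sum_mem fun k _ => S.smul_mem _ (hpow k)
  · exact S.zero_mem

theorem expApply_thetaApply {N : ℕ} (h : ∀ k, N ≤ k → (A ^ k) p = 0) :
    expApply A (thetaApply A p) = ∑ k ∈ range N, (((k + 1) ! : ℂ))⁻¹ • (A ^ k) p := by
  have hθ : ∀ i, N ≤ i → (A ^ i) (thetaApply A p) = 0 := fun i hi => by
    rw [thetaApply_eq_sum h, map_sum]
    refine sum_eq_zero fun k _ => ?_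
    rw [map_smul, ← Module.End.mul_apply, ← pow_add, h _ (by omega), smul_zero]
  rw [expApply_eq_sum hθ, thetaApply_eq_sum h]
  calc ∑ i ∈ range N, ((i ! : ℂ))⁻¹ • (A ^ i)
          (∑ j ∈ range N, ((-1) ^ j * (((j + 1) ! : ℂ))⁻¹) • (A ^ j) p)
      = ∑ i ∈ range N, ∑ j ∈ range N,
          (((i ! : ℂ))⁻¹ * ((-1) ^ j * (((j + 1) ! : ℂ))⁻¹)) • (A ^ (i + j)) p := by
        simp only [map_sum, map_smul, smul_sum, smul_smul, pow_add, Module.End.mul_apply]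
    _ = ∑ k ∈ range N, ∑ ij ∈ antidiagonal k,
          (((ij.1 ! : ℂ))⁻¹ * ((-1) ^ ij.2 * (((ij.2 + 1) ! : ℂ))⁻¹)) •
            (A ^ (ij.1 + ij.2)) p :=
        sum_range_sum_range_eq_sum_antidiagonal fun i j hij => by rw [h _ hij, smul_zero]
    _ = ∑ k ∈ range N, (((k + 1) ! : ℂ))⁻¹ • (A ^ k) p := by
        refine sum_congr rfl fun k _ => ?_
        rw [← sum_antidiagonal_inv_factorial_mul_neg_one_pow, sum_smul]
        exact sum_congr rfl fun ij hij => by rw [HasAntidiagonal.mem_antidiagonal.1 hij]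

theorem add_pow_apply_of_mem {S : Set M} (hA : Set.MapsTo A S S) (hB : ∀ p ∈ S, B p = 0)
    (hp : p ∈ S) (k : ℕ) : ((A + B) ^ k) p = (A ^ k) p := by
  induction k generalizing p with
  | zero => rfl
  | succ k ih =>
    rw [pow_succ, pow_succ, Module.End.mul_apply, Module.End.mul_apply, LinearMap.add_apply,
      hB p hp, add_zero, ih (hA hp)]

theorem LocNilpOn.add_of_mem {S : Set M} (hA : Set.MapsTo A S S) (hB : ∀ p ∈ S, B p = 0)
    (hp : p ∈ S) (h : LocNilpOn A p) : LocNilpOn (A + B) p :=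
  let ⟨N, hN⟩ := h
  ⟨N, fun k hk => by rw [add_pow_apply_of_mem hA hB hp, hN k hk]⟩

theorem expApply_add_of_mem {S : Set M} (hA : Set.MapsTo A S S) (hB : ∀ p ∈ S, B p = 0)
    (hp : p ∈ S) (h : LocNilpOn A p) : expApply (A + B) p = expApply A p := by
  obtain ⟨N, hN⟩ := h
  rw [expApply_eq_sum hN, expApply_eq_sum (N := N) fun k hk => by
    rw [add_pow_apply_of_mem hA hB hp, hN k hk]]
  simp only [add_pow_apply_of_mem hA hB hp]

theorem expApply_add_eq_add_expApply_thetaApply {S : Set M} (hA : Set.MapsTo A S S)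
    (hB : ∀ p ∈ S, B p = 0) {g : M} (hpg : (A + B) p = g) (hg : g ∈ S) (h : LocNilpOn A g) :
    expApply (A + B) p = p + expApply A (thetaApply A g) := by
  obtain ⟨N, hN⟩ := h
  rw [expApply_eq_add_sum (N := N) fun k hk => by
      rw [hpg, add_pow_apply_of_mem hA hB hg, hN k hk],
    expApply_thetaApply hN, hpg]
  simp only [add_pow_apply_of_mem hA hB hg]

end LocallyNilpotent

theorem Derivation.sum_apply {ι R A M : Type*} [CommSemiring R] [CommSemiring A] [Algebra R A]
    [AddCommMonoid M] [Module A M] [Module R M] (s : Finset ι) (D : ι → Derivation R A M)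
    (a : A) :
    (∑ i ∈ s, D i) a = ∑ i ∈ s, D i a := by
  rw [← Derivation.coeFnAddMonoidHom_apply, map_sum, Finset.sum_apply]
  rfl

section Derivation

variable {R : Type} [CommRing R] [Algebra ℂ R] (D : Derivation ℂ R R) {p q : R}

theorem Derivation.pow_apply_mul (k : ℕ) (a b : R) :
    ((D : Module.End ℂ R) ^ k) (a * b) =
      ∑ ij ∈ antidiagonal k,
        k.choose ij.1 •
          (((D : Module.End ℂ R) ^ ij.1) a * ((D : Module.End ℂ R) ^ ij.2) b) := by
  induction k with
  | zero => simp
  | succ k ih =>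
    rw [sum_antidiagonal_choose_succ_nsmul
      (fun i j => ((D : Module.End ℂ R) ^ i) a * ((D : Module.End ℂ R) ^ j) b) k]
    simp only [pow_succ', Module.End.mul_apply, ih, map_sum, map_nsmul, Derivation.coeFn_coe,
      Derivation.leibniz, smul_eq_mul, nsmul_add, sum_add_distrib]
    rw [add_right_inj]
    refine sum_congr rfl fun ij hij => ?_
    rw [Nat.choose_symm_of_eq_add (HasAntidiagonal.mem_antidiagonal.1 hij).symm, mul_comm]

theorem LocNilpOn.mul (hp : LocNilpOn (D : Module.End ℂ R) p)
    (hq : LocNilpOn (D : Module.End ℂ R) q) : LocNilpOn (D : Module.End ℂ R) (p * q) := by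
  obtain ⟨N₁, h₁⟩ := hp
  obtain ⟨N₂, h₂⟩ := hq
  refine ⟨N₁ + N₂, fun k hk => ?_⟩
  rw [D.pow_apply_mul]
  refine sum_eq_zero fun ij hij => ?_
  rw [HasAntidiagonal.mem_antidiagonal] at hij
  rcases le_or_gt N₁ ij.1 with h | h
  · rw [h₁ _ h, zero_mul, smul_zero]
  · rw [h₂ _ (by omega), mul_zero, smul_zero]

theorem LocNilpOn.pow (hp : LocNilpOn (D : Module.End ℂ R) p) (e : ℕ) :
    LocNilpOn (D : Module.End ℂ R) (p ^ e) := by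
  induction e with
  | zero => exact LocNilpOn.of_apply_eq_zero (by simp)
  | succ e ih => rw [pow_succ]; exact ih.mul D hp

theorem inv_factorial_mul_add_choose (i j : ℕ) :
    (((i + j) ! : ℂ))⁻¹ * (i + j).choose i = ((i ! : ℂ))⁻¹ * ((j ! : ℂ))⁻¹ := by
  rw [Nat.cast_add_choose]
  have hfac : ((i + j) ! : ℂ) ≠ 0 := by exact_mod_cast (i + j).factorial_ne_zero
  field_simp

theorem expApply_mul (hp : LocNilpOn (D : Module.End ℂ R) p)
    (hq : LocNilpOn (D : Module.End ℂ R) q) :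
    expApply (D : Module.End ℂ R) (p * q) =
      expApply (D : Module.End ℂ R) p * expApply (D : Module.End ℂ R) q := by
  obtain ⟨N₁, h₁⟩ := hp
  obtain ⟨N₂, h₂⟩ := hq
  set E := (D : Module.End ℂ R)
  have hvan : ∀ i j, N₁ + N₂ ≤ i + j → (E ^ i) p * (E ^ j) q = 0 := fun i j hij => by
    rcases le_or_gt N₁ i with h | h
    · rw [h₁ _ h, zero_mul]
    · rw [h₂ _ (by omega), mul_zero]
  rw [expApply_eq_sum (N := N₁ + N₂) fun k hk => h₁ k (by omega),
    expApply_eq_sum (N := N₁ + N₂) fun k hk => h₂ k (by omega), sum_mul_sum,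
    sum_range_sum_range_eq_sum_antidiagonal fun i j hij => by
      rw [smul_mul_smul_comm, hvan i j hij, smul_zero],
    expApply_eq_sum (N := N₁ + N₂) fun k hk => by
      rw [D.pow_apply_mul]
      exact sum_eq_zero fun ij hij => by
        rw [hvan _ _ (by rw [HasAntidiagonal.mem_antidiagonal.1 hij]; exact hk), smul_zero]]
  refine sum_congr rfl fun k _ => ?_
  rw [D.pow_apply_mul, smul_sum]
  refine sum_congr rfl fun ij hij => ?_
  rw [← HasAntidiagonal.mem_antidiagonal.1 hij, smul_mul_smul_comm,
    ← Nat.cast_smul_eq_nsmul ℂ, smul_smul, inv_factorial_mul_add_choose]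

noncomputable def expAlgHom (hD : ∀ p, LocNilpOn (D : Module.End ℂ R) p) : R →ₐ[ℂ] R where
  toFun := expApply (D : Module.End ℂ R)
  map_one' := expApply_of_apply_eq_zero D.map_one_eq_zero
  map_mul' p q := expApply_mul D (hD p) (hD q)
  map_zero' := expApply_of_apply_eq_zero (map_zero _)
  map_add' p q := expApply_add (hD p) (hD q)
  commutes' r := expApply_of_apply_eq_zero (D.map_algebraMap r)

theorem expAlgHom_apply (hD : ∀ p, LocNilpOn (D : Module.End ℂ R) p) (p : R) :
    expAlgHom D hD p = expApply (D : Module.End ℂ R) p := rfl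

end Derivation

section MvPolynomial

variable {σ : Type} (A : Derivation ℂ (MvPolynomial σ ℂ) (MvPolynomial σ ℂ))

theorem locNilpOn_of_forall_X
    (h : ∀ a, LocNilpOn (A : Module.End ℂ (MvPolynomial σ ℂ)) (X a))
    (p : MvPolynomial σ ℂ) : LocNilpOn (A : Module.End ℂ (MvPolynomial σ ℂ)) p := by
  induction p using MvPolynomial.induction_on with
  | C c => exact LocNilpOn.of_apply_eq_zero (A.map_algebraMap c)
  | add p q hp hq => exact hp.add hq
  | mul_X p a hp => exact hp.mul A (h a)

theorem coe_smul_pderiv (f : MvPolynomial σ ℂ) (y : σ) :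
    ((f • pderiv y : Derivation ℂ (MvPolynomial σ ℂ) (MvPolynomial σ ℂ)) :
        Module.End ℂ (MvPolynomial σ ℂ)) =
      LinearMap.mulLeft ℂ f * (pderiv y).toLinearMap := by
  ext p
  simp

theorem pderiv_apply_eq_apply_pderiv {y : σ} (hA : ∀ a, pderiv y (A (X a)) = 0)
    (p : MvPolynomial σ ℂ) : pderiv y (A p) = A (pderiv y p) := by
  classical
  have hcomm : ⁅pderiv y, A⁆ = 0 := derivation_ext fun a => by
    rw [Derivation.commutator_apply, hA, pderiv_X, Pi.single_apply]
    split_ifs <;> simp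
  simpa [Derivation.commutator_apply, sub_eq_zero] using Derivation.congr_fun hcomm p

theorem expApply_add_smul_pderiv
    (hA : ∀ p, LocNilpOn (A : Module.End ℂ (MvPolynomial σ ℂ)) p)
    {y : σ} (hAy : A (X y) = 0) (hAfree : ∀ a, pderiv y (A (X a)) = 0)
    {g : MvPolynomial σ ℂ} (hg : pderiv y g = 0) (p : MvPolynomial σ ℂ) :
    expApply ((A + g • pderiv y : Derivation ℂ _ _) : Module.End ℂ (MvPolynomial σ ℂ)) p =
      expApply (A : Module.End ℂ (MvPolynomial σ ℂ))
        (expApply ((thetaApply (A : Module.End ℂ (MvPolynomial σ ℂ)) g • pderiv y :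
          Derivation ℂ _ _) : Module.End ℂ (MvPolynomial σ ℂ)) p) := by
  set E : Module.End ℂ (MvPolynomial σ ℂ) := A.toLinearMap
  set B : Derivation ℂ (MvPolynomial σ ℂ) (MvPolynomial σ ℂ) := g • pderiv y
  set C : Derivation ℂ (MvPolynomial σ ℂ) (MvPolynomial σ ℂ) := thetaApply E g • pderiv y
  set K := LinearMap.ker (pderiv y : Derivation ℂ (MvPolynomial σ ℂ) _).toLinearMap
  have hAK : Set.MapsTo E K K := fun q hq => by
    simp_all [K, E, pderiv_apply_eq_apply_pderiv A hAfree q]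
  have hBK : ∀ q ∈ K, B.toLinearMap q = 0 := fun q hq => by simp_all [K, B]
  have hCK : ∀ q ∈ K, C.toLinearMap q = 0 := fun q hq => by simp_all [K, C]
  have hθK : thetaApply E g ∈ K := thetaApply_mem hAK hg
  have hXK : ∀ a, a ≠ y → X a ∈ K := fun a ha => by simp [K, pderiv_X_of_ne ha]
  have hD : (A + B).toLinearMap = E + B.toLinearMap := Derivation.coe_add_linearMap _ _
  have hDy : (E + B.toLinearMap) (X y) = g := by simp [E, B, hAy]
  have hCy : C.toLinearMap (X y) = thetaApply E g := by simp [C]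
  have hDloc := locNilpOn_of_forall_X (A + B) fun a => by
    rw [hD]
    by_cases ha : a = y
    · subst ha
      exact LocNilpOn.of_apply (hDy ▸ (hA g).add_of_mem hAK hBK hg)
    · exact (hA _).add_of_mem hAK hBK (hXK a ha)
  have hCloc := locNilpOn_of_forall_X C fun a => by
    by_cases ha : a = y
    · subst ha
      exact LocNilpOn.of_apply (hCy ▸ LocNilpOn.of_apply_eq_zero (hCK _ hθK))
    · exact LocNilpOn.of_apply_eq_zero (hCK _ (hXK a ha))
  suffices (expAlgHom A hA).comp (expAlgHom C hCloc) = expAlgHom (A + B) hDloc from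
    (AlgHom.congr_fun this p).symm
  refine algHom_ext fun a => ?_
  simp only [AlgHom.comp_apply, expAlgHom_apply, hD]
  by_cases ha : a = y
  · subst ha
    rw [expApply_add_eq_add_expApply_thetaApply hAK hBK hDy hg (hA g),
      expApply_of_apply_apply_eq_zero (A := C.toLinearMap) (by rw [hCy]; exact hCK _ hθK), hCy,
      expApply_add (hA _) (hA _), expApply_of_apply_eq_zero hAy]
  · rw [expApply_of_apply_eq_zero (hCK _ (hXK a ha)),
      expApply_add_of_mem hAK hBK (hXK a ha) (hA _)]

end MvPolynomial

section Chain

variable {n : ℕ} (hn : 0 < n) (m : ℕ → ℕ) (t : ℂ)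

noncomputable def chainDerivation (i : ℕ) :
    Derivation ℂ (MvPolynomial (Fin n) ℂ) (MvPolynomial (Fin n) ℂ) :=
  t • (pderiv ⟨0, hn⟩ + ∑ k ∈ univ.filter (fun k : Fin n => 0 < k.val ∧ k.val < i),
    (X ⟨k.val - 1, lt_of_le_of_lt (Nat.sub_le _ _) k.isLt⟩ : MvPolynomial (Fin n) ℂ) ^
      (m k.val) • pderiv k)

theorem coe_chainDerivation (i : ℕ) :
    (chainDerivation hn m t i : Module.End ℂ (MvPolynomial (Fin n) ℂ)) =
      DchainOp n hn m t i := by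
  refine LinearMap.ext fun p => ?_
  simp [chainDerivation, DchainOp, pd', mX', LinearMap.pow_mulLeft, Derivation.sum_apply]

theorem chainDerivation_X (i : ℕ) (a : Fin n) :
    chainDerivation hn m t i (X a) =
      if a.val = 0 then t • 1
      else if a.val < i then
        t • X ⟨a.val - 1, lt_of_le_of_lt (Nat.sub_le _ _) a.isLt⟩ ^ m a.val
      else 0 := by
  classical
  simp only [chainDerivation, Derivation.coe_add, Derivation.coe_smul, Pi.add_apply,
    Pi.smul_apply, pderiv_X, Pi.single_apply, Derivation.sum_apply,
    smul_eq_mul, mul_ite, mul_one, mul_zero, sum_ite_eq, mem_filter, mem_univ, true_and]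
  simp only [Fin.ext_iff]
  split_ifs <;> simp_all

theorem locNilpOn_chainDerivation (i : ℕ) (p : MvPolynomial (Fin n) ℂ) :
    LocNilpOn (chainDerivation hn m t i : Module.End ℂ (MvPolynomial (Fin n) ℂ)) p := by
  refine locNilpOn_of_forall_X _ (fun a => ?_) p
  induction ha : a.val using Nat.strong_induction_on generalizing a with
  | _ k ih =>
    refine LocNilpOn.of_apply ?_
    rw [Derivation.coeFn_coe, chainDerivation_X]
    split_ifs with h0 hi
    · exact (LocNilpOn.of_apply_eq_zero (Derivation.map_one_eq_zero _)).smul t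
    · exact ((ih (a.val - 1) (by omega) _ rfl).pow _ _).smul t
    · exact LocNilpOn.of_apply_eq_zero (map_zero _)

theorem chainDerivation_X_of_le {i : ℕ} {a : Fin n} (ha : a.val ≠ 0) (hia : i ≤ a.val) :
    chainDerivation hn m t i (X a) = 0 := by
  rw [chainDerivation_X, if_neg ha, if_neg (by omega)]

theorem pderiv_chainDerivation_X {i : ℕ} {b : Fin n} (hib : i ≤ b.val + 1) (a : Fin n) :
    pderiv b (chainDerivation hn m t i (X a)) = 0 := by
  classical
  rw [chainDerivation_X]
  split_ifs
  · simp
  · simp [pderiv_X, Pi.single_apply, Fin.ext_iff]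
    omega
  · simp

theorem chainDerivation_self_eq_add (hn2 : 2 ≤ n) :
    chainDerivation hn m t n = chainDerivation hn m t (n - 1) +
      (t • (X ⟨n - 2, Nat.sub_lt hn two_pos⟩ : MvPolynomial (Fin n) ℂ) ^ m (n - 1)) •
        pderiv ⟨n - 1, Nat.sub_lt hn one_pos⟩ := by
  classical
  refine derivation_ext fun a => ?_
  simp only [Derivation.add_apply, Derivation.smul_apply, chainDerivation_X, pderiv_X,
    Pi.single_apply, Fin.ext_iff, smul_eq_mul]
  have := a.isLt
  split_ifs <;> simp_all [Nat.sub_sub] <;> omega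

end Chain

end ChainFactorization

noncomputable section

/-- Lemma 4.1. -/
theorem chain_operator_factorization (n : ℕ) (hn : 2 ≤ n) (m : ℕ → ℕ) (t : ℂ) :
    (∀ (i : ℕ) (p : MvPolynomial (Fin n) ℂ),
        LocNilpOn (DchainOp n (by omega) m t i) p) ∧
    ∀ p : MvPolynomial (Fin n) ℂ,
      expApply (DchainOp n (by omega) m t n) p =
        expApply (DchainOp n (by omega) m t (n - 1))
          (expApply
            (t • (LinearMap.mulLeft ℂ
                (thetaApply (DchainOp n (by omega) m t (n - 1))
                  ((MvPolynomial.X (⟨n - 2, by omega⟩ : Fin n)) ^ (m (n - 1)))) *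
              pd' (⟨n - 1, by omega⟩ : Fin n))) p) := by
  have hn0 : 0 < n := by omega
  refine ⟨fun i p => coe_chainDerivation hn0 m t i ▸ locNilpOn_chainDerivation hn0 m t i p,
    fun p => ?_⟩
  have hfac := expApply_add_smul_pderiv (chainDerivation hn0 m t (n - 1))
    (locNilpOn_chainDerivation hn0 m t _) (y := ⟨n - 1, by omega⟩)
    (chainDerivation_X_of_le hn0 m t (by simp; omega) le_rfl)
    (pderiv_chainDerivation_X hn0 m t (by simp))
    (g := t • MvPolynomial.X ⟨n - 2, by omega⟩ ^ m (n - 1))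
    (by rw [Derivation.map_smul, MvPolynomial.pderiv_pow,
      MvPolynomial.pderiv_X_of_ne (Fin.ne_of_val_ne (by dsimp; omega)), mul_zero, smul_zero]) p
  rw [← chainDerivation_self_eq_add hn0 m t hn,
    thetaApply_smul _ (locNilpOn_chainDerivation hn0 m t _ _), coe_smul_pderiv,
    coe_chainDerivation, coe_chainDerivation] at hfac
  rw [hfac]
  congr 2
  exact LinearMap.ext fun q => by simp [pd']

end
end

section
/- Let n≥1, let m_1,…,m_{n−1} be positive integers, and let f:ℝ^n→ℝ be a continuously differentiable function. Define functions η_i of (t,x_1,…,x_{n−1}) recursively by η_1(t)=t and η_{i+1}(t)=∫_0^t (x_i + η_i(y))^{m_i} dy for 1≤i≤n−1 (the integrand being evaluated at the same x-variables). Then u(t,x_1,…,x_n) = f(x_1+η_1(t), x_2+η_2(t), …, x_n+η_n(t)) satisfies the first-order evolution equation ∂_t u = ∂_{x_1}u + Σ_{i=1}^{n−1} x_i^{m_i} ∂_{x_{i+1}}u together with the initial condition u(0,x_1,…,x_n)=f(x_1,…,x_n). -/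
noncomputable section

attribute [local instance 100] LieRing.ofAssociativeRing

variable {n : ℕ} [NeZero n]

end

noncomputable section

/-!
The maps `Φ_t : x ↦ (x_i + η_i(t, x))_i` form the flow of the polynomial vector field
`V = ∂_{x_1} + Σ x_i^{m_i} ∂_{x_{i+1}}`: `Φ_0 = id`, `Φ_t ∘ Φ_s = Φ_{t+s}` (split the integral
defining `η_{i+1}(t + s)` at `s` and shift the variable), and `∂_s Φ_s x = V(x)` at `s = 0`.
Hence `u(t + s, x) = u(t, Φ_s x)`, and differentiating at `s = 0` gives `∂_t u = V · ∇u`.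
Each `η_i` is a polynomial in `t` and `x`, which supplies the differentiability in `x`
needed for the chain rule.
-/

open Polynomial

theorem exists_eval₂_eq_integral {σ : Type*} (p : (MvPolynomial σ ℝ)[X]) :
    ∃ P : (MvPolynomial σ ℝ)[X], ∀ (x : σ → ℝ) (t : ℝ),
      ∫ y in (0:ℝ)..t, p.eval₂ (MvPolynomial.eval x) y = P.eval₂ (MvPolynomial.eval x) t := by
  induction p using Polynomial.induction_on' with
  | add p q hp hq =>
    obtain ⟨P, hP⟩ := hp
    obtain ⟨Q, hQ⟩ := hq
    refine ⟨P + Q, fun x t => ?_⟩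
    simp only [eval₂_add]
    rw [intervalIntegral.integral_add ((p.continuous_eval₂ _).intervalIntegrable _ _)
      ((q.continuous_eval₂ _).intervalIntegrable _ _), hP, hQ]
  | monomial k a =>
    refine ⟨monomial (k + 1) (MvPolynomial.C ((k + 1 : ℝ)⁻¹) * a), fun x t => ?_⟩
    simp only [eval₂_monomial, intervalIntegral.integral_const_mul, integral_pow, map_mul,
      MvPolynomial.eval_C]
    field_simp
    ring

section Flow

variable {E F : Type*} [NormedAddCommGroup E] [NormedSpace ℝ E] [NormedAddCommGroup F]
  [NormedSpace ℝ F]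

theorem hasDerivAt_comp_flow {Φ : ℝ → E → E} (hflow : ∀ t s x, Φ t (Φ s x) = Φ (t + s) x)
    {x v : E} (hx : Φ 0 x = x) (hv : HasDerivAt (fun s => Φ s x) v 0) {g : E → F} {t : ℝ}
    (hg : DifferentiableAt ℝ (fun y => g (Φ t y)) x) :
    HasDerivAt (fun τ => g (Φ τ x)) (fderiv ℝ (fun y => g (Φ t y)) x v) t := by
  have hcurve : HasDerivAt (fun τ => Φ (τ - t) x) v t :=
    HasDerivAt.comp_sub_const t t (by rwa [sub_self])
  have hcomp := hg.hasFDerivAt.comp_hasDerivAt_of_eq t hcurve (by simp [hx])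
  simpa [Function.comp_def, hflow] using hcomp

end Flow

theorem fderiv_apply_eq_sum_deriv_update {ι : Type*} [Fintype ι] [DecidableEq ι]
    {g : (ι → ℝ) → ℝ} {x : ι → ℝ} (hg : DifferentiableAt ℝ g x) (v : ι → ℝ) :
    fderiv ℝ g x v = ∑ i, v i * deriv (fun s => g (Function.update x i s)) (x i) := by
  have hpartial : ∀ i, deriv (fun s => g (Function.update x i s)) (x i) =
      fderiv ℝ g x (Pi.single i 1) := fun i =>
    (hg.hasFDerivAt.comp_hasDerivAt_of_eq _ (hasDerivAt_update x i (x i)) (by simp)).deriv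
  simp only [hpartial, ← smul_eq_mul, ← map_smul, ← map_sum]
  congr 1
  ext j
  simp [Pi.single_apply]

section EtaChain

variable (m : ℕ → ℕ)

theorem etaChain_apply_zero (x : ℕ → ℝ) (j : ℕ) : etaChain m x j 0 = 0 := by
  cases j <;> simp [etaChain]

theorem exists_eval₂_eq_etaChain (j : ℕ) :
    ∃ p : (MvPolynomial ℕ ℝ)[X], ∀ (x : ℕ → ℝ) (t : ℝ),
      etaChain m x j t = p.eval₂ (MvPolynomial.eval x) t := by
  induction j with
  | zero => exact ⟨X, fun x t => by simp [etaChain]⟩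
  | succ j ih =>
    obtain ⟨p, hp⟩ := ih
    obtain ⟨P, hP⟩ := exists_eval₂_eq_integral ((C (MvPolynomial.X j) + p) ^ m (j + 1))
    exact ⟨P, fun x t => by
      simp only [etaChain, hp, ← hP, eval₂_pow, eval₂_add, eval₂_C, MvPolynomial.eval_X]⟩

theorem continuous_etaChain (x : ℕ → ℝ) (j : ℕ) : Continuous (etaChain m x j) := by
  obtain ⟨p, hp⟩ := exists_eval₂_eq_etaChain m j
  rw [funext (hp x)]
  exact p.continuous_eval₂ _

theorem hasDerivAt_etaChain_succ (x : ℕ → ℝ) (j : ℕ) (t : ℝ) :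
    HasDerivAt (etaChain m x (j + 1)) ((x j + etaChain m x j t) ^ m (j + 1)) t :=
  (((continuous_etaChain m x j).const_add (x j)).pow _).integral_hasStrictDerivAt 0 t
    |>.hasDerivAt

theorem etaChain_congr {x y : ℕ → ℝ} {j : ℕ} (h : ∀ k < j, x k = y k) :
    etaChain m x j = etaChain m y j := by
  induction j with
  | zero => rfl
  | succ j ih =>
    funext t
    simp only [etaChain, h j j.lt_succ_self, ih fun k hk => h k (hk.trans j.lt_succ_self)]

def chainFlow (t : ℝ) (x : ℕ → ℝ) : ℕ → ℝ := fun j => x j + etaChain m x j t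

def chainField (x : ℕ → ℝ) : ℕ → ℝ
  | 0 => 1
  | j + 1 => x j ^ m (j + 1)

theorem chainFlow_chainFlow (t s : ℝ) (x : ℕ → ℝ) :
    chainFlow m t (chainFlow m s x) = chainFlow m (t + s) x := by
  funext j
  induction j generalizing t with
  | zero => simp only [chainFlow, etaChain]; ring
  | succ j ih =>
    have hcont : Continuous fun τ => (x j + etaChain m x j τ) ^ m (j + 1) :=
      ((continuous_etaChain m x j).const_add _).pow _
    simp only [chainFlow] at ih ⊢
    simp only [etaChain, chainFlow, ih, zero_add,
      intervalIntegral.integral_comp_add_right (fun τ => (x j + etaChain m x j τ) ^ m (j + 1))]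
    rw [add_assoc, intervalIntegral.integral_add_adjacent_intervals
      (hcont.intervalIntegrable _ _) (hcont.intervalIntegrable _ _)]

theorem hasDerivAt_chainFlow_zero (x : ℕ → ℝ) (j : ℕ) :
    HasDerivAt (fun s => chainFlow m s x j) (chainField m x j) 0 := by
  cases j with
  | zero => simpa [chainFlow, etaChain, chainField] using (hasDerivAt_id (0 : ℝ)).const_add (x 0)
  | succ j =>
    simpa [chainFlow, chainField, etaChain_apply_zero] using
      (hasDerivAt_etaChain_succ m x j 0).const_add (x (j + 1))

theorem chainFlow_congr (t : ℝ) {x y : ℕ → ℝ} {j : ℕ} (h : ∀ k ≤ j, x k = y k) :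
    chainFlow m t x j = chainFlow m t y j := by
  simp only [chainFlow, h j le_rfl, etaChain_congr m fun k hk => h k hk.le]

end EtaChain

section FinFlow

variable {n : ℕ} (m : ℕ → ℕ)

def zeroExtend (x : Fin n → ℝ) : ℕ → ℝ := fun k => if h : k < n then x ⟨k, h⟩ else 0

def chainFlowFin (t : ℝ) (x : Fin n → ℝ) : Fin n → ℝ :=
  fun i => x i + etaChain m (zeroExtend x) i t

theorem chainFlowFin_apply (t : ℝ) (x : Fin n → ℝ) (i : Fin n) :
    chainFlowFin m t x i = chainFlow m t (zeroExtend x) i := by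
  simp [chainFlowFin, chainFlow, zeroExtend]

theorem chainFlowFin_zero (x : Fin n → ℝ) : chainFlowFin m 0 x = x := by
  funext i
  simp [chainFlowFin, etaChain_apply_zero]

theorem chainFlowFin_chainFlowFin (t s : ℝ) (x : Fin n → ℝ) :
    chainFlowFin m t (chainFlowFin m s x) = chainFlowFin m (t + s) x := by
  funext i
  rw [chainFlowFin_apply, chainFlowFin_apply, ← chainFlow_chainFlow]
  -- the zero padding past `n` is invisible to coordinates `i < n`
  exact chainFlow_congr m t fun k hk => by
    simp [zeroExtend, chainFlowFin_apply, lt_of_le_of_lt hk i.isLt]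

theorem hasDerivAt_chainFlowFin_zero (x : Fin n → ℝ) :
    HasDerivAt (fun s => chainFlowFin m s x) (fun i => chainField m (zeroExtend x) i) 0 :=
  hasDerivAt_pi.2 fun i => by
    simpa only [chainFlowFin_apply] using hasDerivAt_chainFlow_zero m (zeroExtend x) i

theorem analyticAt_zeroExtend_apply (x : Fin n → ℝ) (k : ℕ) :
    AnalyticAt ℝ (fun y : Fin n → ℝ => zeroExtend y k) x := by
  by_cases h : k < n
  · simp only [zeroExtend, dif_pos h]
    exact (ContinuousLinearMap.proj (R := ℝ) (φ := fun _ : Fin n => ℝ) ⟨k, h⟩).analyticAt x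
  · simpa [zeroExtend, h] using analyticAt_const

theorem differentiable_chainFlowFin (t : ℝ) : Differentiable ℝ (chainFlowFin (n := n) m t) := by
  refine differentiable_pi.2 fun i x => ?_
  obtain ⟨p, hp⟩ := exists_eval₂_eq_etaChain m i
  have hpoly : ∀ y : Fin n → ℝ, chainFlowFin m t y i =
      y i + MvPolynomial.aeval (zeroExtend y) (p.eval (MvPolynomial.C t)) := fun y => by
    rw [MvPolynomial.aeval_eq_eval, ← eval₂_at_apply, MvPolynomial.eval_C]
    simp [chainFlowFin, hp]
  simp only [hpoly]
  exact (differentiableAt_apply i x).add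
    (AnalyticAt.aeval_mvPolynomial (analyticAt_zeroExtend_apply x) _).differentiableAt

theorem sum_chainField_zeroExtend_mul (hn : 1 ≤ n) (x D : Fin n → ℝ) :
    ∑ k : Fin n, chainField m (zeroExtend x) k * D k =
      D ⟨0, hn⟩ + ∑ j : Fin n,
        if hj : j.val + 1 < n then x j ^ m (j.val + 1) * D ⟨j.val + 1, hj⟩ else 0 := by
  obtain ⟨n, rfl⟩ : ∃ k, n = k + 1 := ⟨n - 1, by omega⟩
  rw [Fin.sum_univ_succ, Fin.sum_univ_castSucc, dif_neg (by simp), add_zero]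
  congr 1
  · simp [chainField]
  · refine Finset.sum_congr rfl fun i _ => ?_
    simp [chainField, zeroExtend, Fin.succ, Fin.castSucc, Fin.castAdd, Fin.castLE]

end FinFlow

theorem chain_first_order_solution_general (n : ℕ) (hn : 1 ≤ n) (m : ℕ → ℕ)
    (f : (Fin n → ℝ) → ℝ) (hf : ContDiff ℝ 1 f) :
    let U : ℝ → (Fin n → ℝ) → ℝ := fun t x =>
      f fun i => x i + etaChain m (fun k => if h : k < n then x ⟨k, h⟩ else 0) i.val t
    (∀ x : Fin n → ℝ, U 0 x = f x) ∧
    ∀ (t : ℝ) (x : Fin n → ℝ),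
      deriv (fun τ => U τ x) t =
        deriv (fun s => U t (Function.update x (⟨0, hn⟩ : Fin n) s)) (x ⟨0, hn⟩) +
          ∑ j : Fin n,
            if hj : j.val + 1 < n then
              (x j) ^ (m (j.val + 1)) *
                deriv (fun s => U t (Function.update x (⟨j.val + 1, hj⟩ : Fin n) s))
                  (x ⟨j.val + 1, hj⟩)
            else 0 := by
  intro U
  have hU : U = fun t x => f (chainFlowFin m t x) := rfl
  simp only [hU]
  refine ⟨fun x => by rw [chainFlowFin_zero], fun t x => ?_⟩
  have hdiff : DifferentiableAt ℝ (fun y => f (chainFlowFin m t y)) x :=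
    (hf.differentiable one_ne_zero).comp (differentiable_chainFlowFin m t) x
  rw [(hasDerivAt_comp_flow (chainFlowFin_chainFlowFin m) (chainFlowFin_zero m x)
      (hasDerivAt_chainFlowFin_zero m x) hdiff).deriv,
    fderiv_apply_eq_sum_deriv_update hdiff, sum_chainField_zeroExtend_mul m hn]

/-- Proposition 4.2. -/
theorem chain_first_order_solution (n : ℕ) (hn : 1 ≤ n) (m : ℕ → ℕ)
    (hm : ∀ i : ℕ, 1 ≤ i → i ≤ n - 1 → 0 < m i)
    (f : (Fin n → ℝ) → ℝ) (hf : ContDiff ℝ 1 f) :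
    let U : ℝ → (Fin n → ℝ) → ℝ := fun t x =>
      f fun i => x i + etaChain m (fun k => if h : k < n then x ⟨k, h⟩ else 0) i.val t
    (∀ x : Fin n → ℝ, U 0 x = f x) ∧
    ∀ (t : ℝ) (x : Fin n → ℝ),
      deriv (fun τ => U τ x) t =
        deriv (fun s => U t (Function.update x (⟨0, hn⟩ : Fin n) s)) (x ⟨0, hn⟩) +
          ∑ j : Fin n,
            if hj : j.val + 1 < n then
              (x j) ^ (m (j.val + 1)) *
                deriv (fun s => U t (Function.update x (⟨j.val + 1, hj⟩ : Fin n) s))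
                  (x ⟨j.val + 1, hj⟩)
            else 0 :=
  chain_first_order_solution_general n hn m f hf

end
end
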